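/- arXiv:2204.06040 — 7 statements merged into one kernel-verified Lean document; each statement's English description precedes it below -/
import Mathlib

section
/- For every r ≥ 1, the r-th cumulant of the Bernoulli distribution B_p is a polynomial in p of degree exactly r whose leading coefficient is (-1)^(r-1)·(r-1)!. -/
open MeasureTheory

noncomputable def bern (p : ℝ) : Measure ℝ :=
  (ENNReal.ofReal (1 - p)) • Measure.dirac 0 + (ENNReal.ofReal p) • Measure.dirac 1

noncomputable def charFun' (μ : Measure ℝ) (t : ℝ) : ℂ :=
  ∫ x, Complex.exp (Complex.I * t * x) ∂μ

noncomputable def cumulant (r : ℕ) (μ : Measure ℝ) : ℂ :=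
  Complex.I ^ (-(r : ℤ)) * iteratedDeriv r (fun t : ℝ => Complex.log (charFun' μ t)) 0

noncomputable def mconv (μ ν : Measure ℝ) : Measure ℝ :=
  (μ.prod ν).map (fun x => x.1 + x.2)

noncomputable def BC : (n : ℕ) → (Fin n → ℝ) → Measure ℝ
  | 0, _ => Measure.dirac 0
  | (n+1), p => mconv (BC n (fun i => p i.castSucc)) (bern (p (Fin.last n)))

def S {I : Type*} [Fintype I] (r : ℕ) (x : I → ℝ) : ℝ := ∑ i, x i ^ r

def E {I : Type*} [Fintype I] [DecidableEq I] (k : ℕ) (x : I → ℝ) : ℝ :=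
  ∑ J ∈ Finset.univ.powersetCard k, ∏ i ∈ J, x i

noncomputable def binomLaw : ℕ → ℝ → Measure ℝ
  | 0, _ => Measure.dirac 0
  | (m+1), q => mconv (binomLaw m q) (bern q)

noncomputable def convFin : (k : ℕ) → (Fin k → Measure ℝ) → Measure ℝ
  | 0, _ => Measure.dirac 0
  | (k+1), μ => mconv (convFin k (fun j => μ j.castSucc)) (μ (Fin.last k))


open Polynomial in


noncomputable def Pber : ℕ → Polynomial ℝ
  | 0 => Polynomial.X
  | (n+1) => (Polynomial.derivative (Pber n)) * (Polynomial.X - Polynomial.X ^ 2)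

lemma XsubX2_natDegree : (Polynomial.X - Polynomial.X ^ 2 : Polynomial ℝ).natDegree = 2 := by
  have h : (Polynomial.X - Polynomial.X ^ 2 : Polynomial ℝ).degree = 2 := by
    rw [sub_eq_add_neg, add_comm]
    rw [Polynomial.degree_add_eq_left_of_degree_lt]
    · simp [Polynomial.degree_X_pow]
    · rw [Polynomial.degree_neg, Polynomial.degree_X, Polynomial.degree_X_pow]
      norm_num
  exact Polynomial.natDegree_eq_of_degree_eq_some h

lemma XsubX2_leadingCoeff : (Polynomial.X - Polynomial.X ^ 2 : Polynomial ℝ).leadingCoeff = -1 := by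
  rw [Polynomial.leadingCoeff, XsubX2_natDegree]
  rw [Polynomial.coeff_sub, Polynomial.coeff_X, Polynomial.coeff_X_pow]
  norm_num

lemma Pber_deg : ∀ n : ℕ, (Pber n).natDegree = n + 1 ∧
    (Pber n).leadingCoeff = (-1) ^ n * (Nat.factorial n : ℝ) := by
  intro n
  induction n with
  | zero => simp [Pber]
  | succ n ih =>
    obtain ⟨hd, hl⟩ := ih
    have hPne : Pber n ≠ 0 := by
      intro h
      rw [h] at hd; simp at hd
    have hfac : ((-1 : ℝ)) ^ n * (Nat.factorial n : ℝ) ≠ 0 := by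
      positivity
    have hDdeg : (Polynomial.derivative (Pber n)).natDegree = n := by
      have := Polynomial.degree_derivative_eq (Pber n) (by omega)
      rw [hd] at this
      simpa using Polynomial.natDegree_eq_of_degree_eq_some this
    have hDlead : (Polynomial.derivative (Pber n)).leadingCoeff = (n+1 : ℝ) * (Pber n).leadingCoeff := by
      rw [Polynomial.leadingCoeff, hDdeg, Polynomial.coeff_derivative, ← hd,
        Polynomial.coeff_natDegree]
      push_cast; ring
    have hDne : Polynomial.derivative (Pber n) ≠ 0 := by
      intro h
      rw [Polynomial.leadingCoeff_eq_zero.mpr h] at hDlead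
      rw [hl] at hDlead
      have : ((n:ℝ)+1) ≠ 0 := by positivity
      exact hfac ((mul_eq_zero.mp hDlead.symm).resolve_left this)
    have hBne : (Polynomial.X - Polynomial.X ^ 2 : Polynomial ℝ) ≠ 0 := by
      intro h
      have := XsubX2_leadingCoeff
      rw [Polynomial.leadingCoeff_eq_zero.mpr h] at this
      norm_num at this
    constructor
    · show ((Polynomial.derivative (Pber n)) * (Polynomial.X - Polynomial.X ^ 2)).natDegree = n + 1 + 1
      rw [Polynomial.natDegree_mul hDne hBne, hDdeg, XsubX2_natDegree]
    · show ((Polynomial.derivative (Pber n)) * (Polynomial.X - Polynomial.X ^ 2)).leadingCoeff = _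
      rw [Polynomial.leadingCoeff_mul, hDlead, hl, XsubX2_leadingCoeff, Nat.factorial_succ]
      push_cast; ring

section analytic
variable {p : ℝ} (hp0 : 0 ≤ p) (hp1 : p ≤ 1)

noncomputable def hfun (p : ℝ) (t : ℝ) : ℂ := 1 - p + p * Complex.exp (Complex.I * t)

noncomputable def gfun (p : ℝ) (t : ℝ) : ℂ := p * Complex.exp (Complex.I * t) / hfun p t

include hp0 hp1 in
lemma charFun'_bern (t : ℝ) : charFun' (bern p) t = hfun p t := by
  have hi0 : Integrable (fun x : ℝ => Complex.exp (Complex.I * t * x)) (Measure.dirac 0) :=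
    (integrable_congr (MeasureTheory.ae_eq_dirac _)).mpr (integrable_const _)
  have hi1 : Integrable (fun x : ℝ => Complex.exp (Complex.I * t * x)) (Measure.dirac 1) :=
    (integrable_congr (MeasureTheory.ae_eq_dirac _)).mpr (integrable_const _)
  rw [charFun', bern, integral_add_measure (hi0.smul_measure ENNReal.ofReal_ne_top)
    (hi1.smul_measure ENNReal.ofReal_ne_top),
    integral_smul_measure, integral_smul_measure, integral_dirac, integral_dirac,
    ENNReal.toReal_ofReal (by linarith), ENNReal.toReal_ofReal hp0]
  simp [hfun]
end analytic

section analytic2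
variable {p : ℝ} (hp0 : 0 ≤ p) (hp1 : p ≤ 1)

include hp0 hp1 in
lemma hfun_mem_slit {t : ℝ} (ht : |t| < 1) : hfun p t ∈ Complex.slitPlane := by
  have habs := abs_lt.mp ht
  have hpi : (1:ℝ) < Real.pi / 2 := by
    have := Real.pi_gt_three; linarith
  have hc : 0 < Real.cos t := Real.cos_pos_of_mem_Ioo ⟨by linarith, by linarith⟩
  have hre : (hfun p t).re = 1 - p + p * Real.cos t := by
    have he : Complex.I * (t:ℂ) = (t:ℂ) * Complex.I := by ring
    simp [hfun, he, Complex.exp_ofReal_mul_I_re]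
  rw [Complex.mem_slitPlane_iff]
  left
  rw [hre]
  nlinarith [Real.cos_le_one t]

include hp0 hp1 in
lemma hfun_ne {t : ℝ} (ht : |t| < 1) : hfun p t ≠ 0 :=
  Complex.slitPlane_ne_zero (hfun_mem_slit hp0 hp1 ht)

lemma hasDerivAt_N (t : ℝ) :
    HasDerivAt (fun s : ℝ => (p:ℂ) * Complex.exp (Complex.I * s))
      ((p:ℂ) * (Complex.exp (Complex.I * t) * Complex.I)) t := by
  have h1 : HasDerivAt (fun s : ℝ => Complex.I * (s:ℂ)) Complex.I t := by
    simpa using (Complex.ofRealCLM.hasDerivAt (x := t)).const_mul Complex.I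
  exact (h1.cexp).const_mul _

lemma hasDerivAt_hfun (t : ℝ) :
    HasDerivAt (hfun p) ((p:ℂ) * (Complex.exp (Complex.I * t) * Complex.I)) t := by
  have := (hasDerivAt_N (p := p) t).const_add ((1:ℂ) - p)
  exact this

include hp0 hp1 in
lemma hasDerivAt_gfun {t : ℝ} (ht : |t| < 1) :
    HasDerivAt (gfun p) (Complex.I * (gfun p t - gfun p t ^ 2)) t := by
  have hne := hfun_ne hp0 hp1 ht
  have hg := (hasDerivAt_N (p := p) t).div (hasDerivAt_hfun (p := p) t) hne
  refine HasDerivAt.congr_deriv (f := gfun p) hg ?_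
  symm
  have hgh : gfun p t * hfun p t = (p:ℂ) * Complex.exp (Complex.I * t) :=
    div_mul_cancel₀ _ hne
  rw [eq_div_iff (pow_ne_zero 2 hne)]
  linear_combination (Complex.I * hfun p t - Complex.I * gfun p t * hfun p t
    - Complex.I * ((p:ℂ) * Complex.exp (Complex.I * (t:ℂ)))) * hgh

include hp0 hp1 in
lemma hasDerivAt_log_hfun {t : ℝ} (ht : |t| < 1) :
    HasDerivAt (fun s : ℝ => Complex.log (hfun p s)) (Complex.I * gfun p t) t := by
  have h := (Complex.hasDerivAt_log (hfun_mem_slit hp0 hp1 ht)).comp t (hasDerivAt_hfun (p := p) t)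
  refine HasDerivAt.congr_deriv (f := fun s : ℝ => Complex.log (hfun p s)) h ?_
  symm
  rw [gfun]
  field_simp [hfun_ne hp0 hp1 ht]

include hp0 hp1 in
lemma iter_main : ∀ n : ℕ, ∀ t : ℝ, |t| < 1 →
    iteratedDeriv (n+1) (fun s : ℝ => Complex.log (hfun p s)) t
      = Complex.I ^ (n+1) * Polynomial.aeval (gfun p t) (Pber n) := by
  intro n
  induction n with
  | zero =>
    intro t ht
    rw [iteratedDeriv_one, (hasDerivAt_log_hfun hp0 hp1 ht).deriv]
    simp [Pber]
  | succ n ih =>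
    intro t ht
    have habs := abs_lt.mp ht
    rw [iteratedDeriv_succ]
    have hmem : Set.Ioo (-1:ℝ) 1 ∈ nhds t := isOpen_Ioo.mem_nhds ⟨habs.1, habs.2⟩
    have hev : iteratedDeriv (n+1) (fun s : ℝ => Complex.log (hfun p s))
        =ᶠ[nhds t] fun s => Complex.I ^ (n+1) *
          Polynomial.eval (gfun p s) ((Pber n).map (algebraMap ℝ ℂ)) := by
      filter_upwards [hmem] with s hs
      rw [ih s (abs_lt.mpr ⟨hs.1, hs.2⟩)]
      rw [Polynomial.aeval_def, ← Polynomial.eval_map]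
    rw [hev.deriv_eq]
    have hpoly := Polynomial.hasDerivAt ((Pber n).map (algebraMap ℝ ℂ)) (gfun p t)
    have hcomp := (hpoly.comp t (hasDerivAt_gfun hp0 hp1 ht)).const_mul
      ((Complex.I : ℂ) ^ (n+1))
    have hd : deriv (fun s => Complex.I ^ (n+1) *
        Polynomial.eval (gfun p s) ((Pber n).map (algebraMap ℝ ℂ))) t
        = Complex.I ^ (n+1) *
          (Polynomial.eval (gfun p t) (Polynomial.derivative ((Pber n).map (algebraMap ℝ ℂ)))
            * (Complex.I * (gfun p t - gfun p t ^ 2))) := HasDerivAt.deriv (by exact hcomp)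
    rw [hd, Polynomial.aeval_def, ← Polynomial.eval_map]
    have hmap : (Pber (n+1)).map (algebraMap ℝ ℂ)
        = (Polynomial.derivative (Pber n)).map (algebraMap ℝ ℂ)
          * (Polynomial.X - Polynomial.X ^ 2) := by
      simp [Pber, Polynomial.map_mul, Polynomial.map_sub, Polynomial.map_pow, Polynomial.map_X]
    rw [hmap, Polynomial.eval_mul, Polynomial.eval_sub, Polynomial.eval_pow, Polynomial.eval_X,
      ← Polynomial.derivative_map]
    ring

end analytic2

/-- For every r ≥ 1, the r-th cumulant of the Bernoulli distribution B_p is a polynomial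
in p of degree exactly r with leading coefficient (-1)^(r-1)·(r-1)!. -/
theorem cumulant_bernoulli_polynomial (r : ℕ) (hr : 1 ≤ r) :
    ∃ Q : Polynomial ℝ, Q.degree = (r : ℕ) ∧
      Q.leadingCoeff = (-1) ^ (r - 1) * (Nat.factorial (r - 1) : ℝ) ∧
      ∀ p ∈ Set.Icc (0:ℝ) 1, cumulant r (bern p) = (Q.eval p : ℝ) := by
  obtain ⟨n, rfl⟩ : ∃ n, r = n + 1 := ⟨r - 1, by omega⟩
  obtain ⟨hd, hl⟩ := Pber_deg n
  have hlne : (Pber n).leadingCoeff ≠ 0 := by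
    rw [hl]; positivity
  have hne : Pber n ≠ 0 := fun h => hlne (Polynomial.leadingCoeff_eq_zero.mpr h)
  refine ⟨Pber n, ?_, ?_, ?_⟩
  · rw [Polynomial.degree_eq_natDegree hne, hd]
  · simpa using hl
  · rintro p ⟨hp0, hp1⟩
    have hfeq : (fun t : ℝ => Complex.log (charFun' (bern p) t))
        = fun t : ℝ => Complex.log (hfun p t) :=
      funext fun t => by rw [charFun'_bern hp0 hp1 t]
    rw [cumulant, hfeq, iter_main hp0 hp1 n 0 (by norm_num)]
    have hg0 : gfun p 0 = (p:ℂ) := by simp [gfun, hfun]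
    have hIpow : Complex.I ^ (-((n+1 : ℕ) : ℤ)) * Complex.I ^ (n+1) = 1 := by
      rw [← zpow_natCast Complex.I (n+1), ← zpow_add₀ Complex.I_ne_zero]
      rw [neg_add_cancel, zpow_zero]
    rw [hg0, ← mul_assoc, hIpow, one_mul]
    have hco := Polynomial.aeval_algebraMap_apply ℂ p (Pber n)
    simp only [Polynomial.coe_aeval_eq_eval, Complex.coe_algebraMap] at hco
    exact hco
end

section
/- For r ∈ ℕ₀ and any probability measure P on ℝ with finite (r+1)-th absolute moment, the moments and cumulants of P satisfy Thiele's recursion: μ_{r+1}(P) = Σ_{ℓ=0}^{r} C(r,ℓ) μ_{r-ℓ}(P) κ_{ℓ+1}(P), where μ_k denotes the k-th moment and κ_k the k-th cumulant. -/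
open MeasureTheory

open Complex FourierTransform Real in
noncomputable def Lb : ℝ →L[ℝ] ℝ →L[ℝ] ℝ := (-(2*π)⁻¹ : ℝ) • (ContinuousLinearMap.mul ℝ ℝ)

open Complex Real in
lemma Lb_apply (v w : ℝ) : Lb v w = -(v * w) / (2*π) := by
  simp [Lb, div_eq_mul_inv]; ring

open Complex FourierTransform Real in
lemma charFun'_eq (μ : Measure ℝ) :
    charFun' μ = VectorFourier.fourierIntegral 𝐞 μ Lb.toLinearMap₁₂ (fun _ => (1:ℂ)) := by
  ext t
  rw [charFun', VectorFourier.fourierIntegral]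
  congr 1
  ext x
  rw [Circle.smul_def, Real.fourierChar_apply, smul_eq_mul, mul_one]
  congr 1
  rw [ContinuousLinearMap.toLinearMap₁₂_apply_apply_apply, Lb_apply]
  push_cast
  have hπ : (π : ℂ) ≠ 0 := by exact_mod_cast Real.pi_ne_zero
  field_simp

lemma integrable_abs_pow (r : ℕ) (P : Measure ℝ) [IsProbabilityMeasure P]
    (hP : Integrable (fun x => |x| ^ (r + 1)) P) (n : ℕ) (hn : n ≤ r + 1) :
    Integrable (fun x => |x| ^ n) P := by
  have : Integrable (fun x : ℝ => 1 + |x| ^ (r+1)) P := (integrable_const 1).add hP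
  refine this.mono ((measurable_abs.pow_const n).aestronglyMeasurable) ?_
  filter_upwards with x
  have h1 : |x| ^ n ≤ 1 + |x| ^ (r+1) := by
    rcases le_total (|x|) 1 with h | h
    · have := pow_le_one₀ (abs_nonneg x) h (n := n)
      nlinarith [pow_nonneg (abs_nonneg x) (r+1)]
    · have := pow_le_pow_right₀ h hn
      nlinarith
  have h2 : (0:ℝ) ≤ |x| ^ n := pow_nonneg (abs_nonneg x) n
  rw [Real.norm_eq_abs, Real.norm_eq_abs, _root_.abs_of_nonneg h2]
  refine h1.trans (le_abs_self _)

lemma key_int (r : ℕ) (P : Measure ℝ) [IsProbabilityMeasure P]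
    (hP : Integrable (fun x => |x| ^ (r + 1)) P) (n : ℕ) (hn : (n:ℕ∞) ≤ (r + 1 : ℕ)) :
    Integrable (fun v : ℝ => ‖v‖^n * ‖(1:ℂ)‖) P := by
  simpa [Real.norm_eq_abs] using integrable_abs_pow r P hP n (by exact_mod_cast hn)

lemma charFun'_contDiff (r : ℕ) (P : Measure ℝ) [IsProbabilityMeasure P]
    (hP : Integrable (fun x => |x| ^ (r + 1)) P) :
    ContDiff ℝ (r+1 : ℕ) (charFun' P) := by
  rw [charFun'_eq]
  exact VectorFourier.contDiff_fourierIntegral Lb (key_int r P hP)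

open Complex FourierTransform Real in
lemma charFun'_iteratedDeriv (r : ℕ) (P : Measure ℝ) [IsProbabilityMeasure P]
    (hP : Integrable (fun x => |x| ^ (r + 1)) P) (n : ℕ) (hn : n ≤ r + 1) :
    iteratedDeriv n (charFun' P) 0 = Complex.I ^ n * ((∫ x, x ^ n ∂P : ℝ) : ℂ) := by
  have hint := key_int r P hP
  have hmeas : AEStronglyMeasurable (fun _ : ℝ => (1:ℂ)) P := aestronglyMeasurable_const
  rw [iteratedDeriv, charFun'_eq,
    VectorFourier.iteratedFDeriv_fourierIntegral Lb hint hmeas (by exact_mod_cast hn),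
    VectorFourier.fourierIntegral_continuousMultilinearMap_apply Real.continuous_fourierChar
      (VectorFourier.integrable_fourierPowSMulRight Lb (hint n (by exact_mod_cast hn)) hmeas)]
  rw [VectorFourier.fourierIntegral]
  have : ∀ v : ℝ, (𝐞 (-(Lb.toLinearMap₁₂ v) 0) : Circle) •
      (VectorFourier.fourierPowSMulRight Lb (fun _ => (1:ℂ)) v n (fun _ => (1:ℝ)))
      = Complex.I ^ n * (v:ℂ) ^ n := by
    intro v
    rw [VectorFourier.fourierPowSMulRight_apply]
    simp only [ContinuousLinearMap.toLinearMap₁₂_apply_apply_apply, map_zero, neg_zero, AddChar.map_zero_eq_one,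
      one_smul, smul_eq_mul, mul_one]
    rw [Finset.prod_const, Lb_apply, Finset.card_univ, Fintype.card_fin, Complex.real_smul]
    have hπ : (π : ℂ) ≠ 0 := by exact_mod_cast Real.pi_ne_zero
    push_cast
    rw [mul_one, ← mul_pow]
    field_simp
    ring
  simp_rw [this]
  rw [MeasureTheory.integral_const_mul]
  congr 1
  simp_rw [← Complex.ofReal_pow]
  exact integral_ofReal

open Finset in
lemma leibniz_within {s : Set ℝ} (hu : UniqueDiffOn ℝ s) :
    ∀ (n : ℕ) (f g : ℝ → ℂ), ContDiffOn ℝ n f s → ContDiffOn ℝ n g s → ∀ x ∈ s,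
    iteratedDerivWithin n (fun t => f t * g t) s x =
      ∑ ℓ ∈ Finset.range (n+1), (n.choose ℓ : ℂ) *
        (iteratedDerivWithin ℓ f s x * iteratedDerivWithin (n - ℓ) g s x) := by
  intro n
  induction n with
  | zero => intro f g _ _ x hx; simp
  | succ n IH =>
    intro f g hf hg x hx
    have hdf : ContDiffOn ℝ n (derivWithin f s) s := hf.derivWithin hu (by norm_cast)
    have hdg : ContDiffOn ℝ n (derivWithin g s) s := hg.derivWithin hu (by norm_cast)
    have hfn : ContDiffOn ℝ n f s := hf.of_le (by exact_mod_cast Nat.le_succ n)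
    have hgn : ContDiffOn ℝ n g s := hg.of_le (by exact_mod_cast Nat.le_succ n)
    have heq : Set.EqOn (derivWithin (fun t => f t * g t) s)
        (fun t => derivWithin f s t * g t + f t * derivWithin g s t) s := by
      intro y hy
      exact derivWithin_fun_mul
        ((hf.differentiableOn (by simp)) y hy)
        ((hg.differentiableOn (by simp)) y hy)
    rw [iteratedDerivWithin_succ',
      iteratedDerivWithin_congr heq hx,
      show (fun t => derivWithin f s t * g t + f t * derivWithin g s t)
        = ((fun t => derivWithin f s t * g t) + (fun t => f t * derivWithin g s t)) from rfl,
      iteratedDerivWithin_add hx hu ((hdf.mul hgn) x hx) ((hfn.mul hdg) x hx),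
      IH _ _ hdf hgn x hx, IH _ _ hfn hdg x hx]
    have e1 : ∀ ℓ, iteratedDerivWithin ℓ (derivWithin f s) s x = iteratedDerivWithin (ℓ+1) f s x :=
      fun ℓ => by rw [iteratedDerivWithin_succ']
    have e2 : ∀ ℓ, iteratedDerivWithin ℓ (derivWithin g s) s x = iteratedDerivWithin (ℓ+1) g s x :=
      fun ℓ => by rw [iteratedDerivWithin_succ']
    simp_rw [e1, e2]
    rw [Finset.sum_choose_succ_mul
      (fun i j => iteratedDerivWithin i f s x * iteratedDerivWithin j g s x) n]
    rw [add_comm]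
    congr 1
    · refine Finset.sum_congr rfl fun i hi => ?_
      rw [Finset.mem_range] at hi
      have h2 : n + 1 - i = n - i + 1 := by omega
      rw [h2]

lemma iteratedDerivWithin_of_isOpen' {n : ℕ} {f : ℝ → ℂ} {s : Set ℝ} {x : ℝ}
    (hs : IsOpen s) (hx : x ∈ s) : iteratedDerivWithin n f s x = iteratedDeriv n f x := by
  rw [iteratedDerivWithin, iteratedDeriv, iteratedFDerivWithin_of_isOpen n hs hx]

/-- Thiele's recursion relating moments and cumulants. -/
theorem thiele_recursion (r : ℕ) (P : Measure ℝ) [IsProbabilityMeasure P]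
    (hP : MeasureTheory.Integrable (fun x => |x| ^ (r + 1)) P) :
    ((∫ x, x ^ (r + 1) ∂P : ℝ) : ℂ) =
      ∑ ℓ ∈ Finset.range (r + 1),
        (r.choose ℓ : ℂ) * ((∫ x, x ^ (r - ℓ) ∂P : ℝ) : ℂ) * cumulant (ℓ + 1) P := by
  set φ := charFun' P with hφdef
  have hφc : ContDiff ℝ (r+1 : ℕ) φ := charFun'_contDiff r P hP
  have hφ0 : φ 0 = 1 := by
    rw [hφdef, charFun']
    simp
  set U := φ ⁻¹' (Metric.ball (1:ℂ) 1) with hUdef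
  have hUopen : IsOpen U := (Metric.isOpen_ball).preimage hφc.continuous
  have hU0 : (0:ℝ) ∈ U := by simp [hUdef, hφ0]
  have hslit : ∀ t ∈ U, φ t ∈ Complex.slitPlane := by
    intro t ht
    have h : ‖φ t - 1‖ < 1 := by
      simpa [hUdef, Metric.mem_ball, dist_eq_norm] using ht
    left
    have hre : |(φ t - 1).re| ≤ ‖φ t - 1‖ := Complex.abs_re_le_norm _
    have : (φ t - 1).re = (φ t).re - 1 := by simp
    rw [this] at hre
    have := abs_le.1 hre
    linarith [this.1]
  have hu : UniqueDiffOn ℝ U := hUopen.uniqueDiffOn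
  set ψ := fun t : ℝ => Complex.log (φ t) with hψdef
  have hψc : ContDiffOn ℝ (r+1 : ℕ) ψ U := by
    intro t ht
    exact (((Complex.contDiffAt_log (hslit t ht)).restrict_scalars ℝ).comp t
      hφc.contDiffAt).contDiffWithinAt
  have hψ'c : ContDiffOn ℝ (r : ℕ) (deriv ψ) U :=
    hψc.deriv_of_isOpen hUopen (by norm_cast)
  have hφd : ∀ t : ℝ, HasDerivAt φ (deriv φ t) t := by
    intro t
    exact ((hφc.differentiable (by simp)) t).hasDerivAt
  have hderiv : ∀ t ∈ U, deriv φ t = deriv ψ t * φ t := by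
    intro t ht
    have hne : φ t ≠ 0 := Complex.slitPlane_ne_zero (hslit t ht)
    have hd : deriv ψ t = deriv φ t / φ t := ((hφd t).clog_real (hslit t ht)).deriv
    rw [hd]
    field_simp
  have hμ : ∀ n, n ≤ r + 1 → iteratedDeriv n φ 0
      = Complex.I ^ n * ((∫ x, x ^ n ∂P : ℝ) : ℂ) :=
    charFun'_iteratedDeriv r P hP
  have key : iteratedDeriv (r+1) φ 0 =
      ∑ ℓ ∈ Finset.range (r+1), (r.choose ℓ : ℂ) *
        (iteratedDeriv (ℓ+1) ψ 0 * iteratedDeriv (r-ℓ) φ 0) := by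
    rw [iteratedDeriv_succ']
    have heq : (deriv φ) =ᶠ[nhds 0] (fun t => deriv ψ t * φ t) := by
      filter_upwards [hUopen.mem_nhds hU0] with t ht
      exact hderiv t ht
    rw [heq.iteratedDeriv_eq r, ← iteratedDerivWithin_of_isOpen' hUopen hU0,
      leibniz_within hu r (deriv ψ) φ hψ'c
        (hφc.contDiffOn.of_le (by exact_mod_cast Nat.le_succ r)) 0 hU0]
    refine Finset.sum_congr rfl fun ℓ hℓ => ?_
    rw [iteratedDerivWithin_of_isOpen' hUopen hU0, iteratedDerivWithin_of_isOpen' hUopen hU0,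
      ← iteratedDeriv_succ']
  have hcum : ∀ ℓ, Complex.I ^ (ℓ+1) * cumulant (ℓ+1) P = iteratedDeriv (ℓ+1) ψ 0 := by
    intro ℓ
    rw [cumulant, ← mul_assoc, ← zpow_natCast (Complex.I) (ℓ+1), ← zpow_add₀ Complex.I_ne_zero,
      add_neg_cancel, zpow_zero, one_mul]
  have hIne : (Complex.I : ℂ) ^ (r+1) ≠ 0 := pow_ne_zero _ Complex.I_ne_zero
  apply mul_left_cancel₀ hIne
  rw [← hμ (r+1) le_rfl, key, Finset.mul_sum]
  refine Finset.sum_congr rfl fun ℓ hℓ => ?_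
  rw [Finset.mem_range] at hℓ
  rw [← hcum ℓ, hμ (r-ℓ) (by omega)]
  have hpow : Complex.I ^ (r+1) = Complex.I ^ (ℓ+1) * Complex.I ^ (r-ℓ) := by
    rw [← pow_add]
    congr 1
    omega
  rw [hpow]
  ring
end

section
/- For every r ≥ 1 and p ∈ [0,1], the cumulants of the Bernoulli distribution satisfy κ_1(B_p) = p and κ_{r+1}(B_p) = p(1-p) · (d/dp) κ_r(B_p), where κ_r(B_p) is viewed as a polynomial function of p. -/
open MeasureTheory

open Complex Polynomial Set

noncomputable def Wf (p : ℝ) (t : ℝ) : ℂ := (1 - p) + p * Complex.exp (Complex.I * t)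
noncomputable def Ff (p : ℝ) (t : ℝ) : ℂ := (p * Complex.exp (Complex.I * t)) / Wf p t

lemma charFun'_bern_s2 (p : ℝ) (hp : p ∈ Set.Icc (0:ℝ) 1) :
    charFun' (bern p) = Wf p := by
  funext t
  have h0 : Integrable (fun x : ℝ => Complex.exp (Complex.I * t * x)) (Measure.dirac 0) :=
    (integrable_const _).congr (ae_eq_dirac _).symm
  have h1 : Integrable (fun x : ℝ => Complex.exp (Complex.I * t * x)) (Measure.dirac 1) :=
    (integrable_const _).congr (ae_eq_dirac _).symm
  unfold charFun' bern Wf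
  rw [integral_add_measure (h0.smul_measure ENNReal.ofReal_ne_top)
      (h1.smul_measure ENNReal.ofReal_ne_top),
    integral_smul_measure, integral_smul_measure, integral_dirac, integral_dirac,
    ENNReal.toReal_ofReal (by linarith [hp.2] : (0:ℝ) ≤ 1 - p),
    ENNReal.toReal_ofReal hp.1]
  simp only [Complex.ofReal_zero, Complex.ofReal_one, mul_zero, mul_one, Complex.exp_zero, real_smul, Complex.ofReal_sub,
    Complex.ofReal_one, smul_eq_mul]

lemma Wf_re_pos (p : ℝ) (hp : p ∈ Icc (0:ℝ) 1) {t : ℝ}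
    (ht : t ∈ Ioo (-(Real.pi/2)) (Real.pi/2)) : 0 < (Wf p t).re := by
  have hc : 0 < Real.cos t := Real.cos_pos_of_mem_Ioo ht
  have hre : (Wf p t).re = (1 - p) + p * Real.cos t := by
    simp [Wf, Complex.exp_re, Complex.add_re, Complex.mul_re]
  rw [hre]
  rcases hp with ⟨h0, h1⟩
  rcases eq_or_lt_of_le h1 with h | h
  · subst h; simpa using hc
  · nlinarith [mul_nonneg h0 hc.le]

lemma Wf_mem_slitPlane (p : ℝ) (hp : p ∈ Icc (0:ℝ) 1) {t : ℝ}
    (ht : t ∈ Ioo (-(Real.pi/2)) (Real.pi/2)) : Wf p t ∈ Complex.slitPlane :=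
  Or.inl (Wf_re_pos p hp ht)

lemma Wf_ne_zero (p : ℝ) (hp : p ∈ Icc (0:ℝ) 1) {t : ℝ}
    (ht : t ∈ Ioo (-(Real.pi/2)) (Real.pi/2)) : Wf p t ≠ 0 :=
  Complex.slitPlane_ne_zero (Wf_mem_slitPlane p hp ht)

lemma hasDerivAt_cexp_It (t : ℝ) :
    HasDerivAt (fun s : ℝ => Complex.exp (Complex.I * s))
      (Complex.I * Complex.exp (Complex.I * t)) t := by
  have h := (((hasDerivAt_id ((t : ℂ))).const_mul Complex.I).cexp).comp_ofReal
  simpa [id, mul_comm] using h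

lemma hasDerivAt_Wf (p t : ℝ) :
    HasDerivAt (Wf p) (Complex.I * ((p : ℂ) * Complex.exp (Complex.I * t))) t := by
  have h := ((hasDerivAt_cexp_It t).const_mul (p : ℂ)).const_add ((1 : ℂ) - p)
  refine h.congr_deriv ?_
  ring

lemma hasDerivAt_Ff (p : ℝ) (hp : p ∈ Icc (0:ℝ) 1) {t : ℝ}
    (ht : t ∈ Ioo (-(Real.pi/2)) (Real.pi/2)) :
    HasDerivAt (Ff p) (Complex.I * Ff p t * (1 - Ff p t)) t := by
  have hW := hasDerivAt_Wf p t
  have hne := Wf_ne_zero p hp ht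
  have h := (((hasDerivAt_cexp_It t).const_mul (p : ℂ)).div hW hne)
  refine h.congr_deriv ?_
  unfold Ff
  field_simp

lemma hasDerivAt_logWf (p : ℝ) (hp : p ∈ Icc (0:ℝ) 1) {t : ℝ}
    (ht : t ∈ Ioo (-(Real.pi/2)) (Real.pi/2)) :
    HasDerivAt (fun s => Complex.log (Wf p s)) (Complex.I * Ff p t) t := by
  have h := (Complex.hasDerivAt_log (Wf_mem_slitPlane p hp ht)).comp t (hasDerivAt_Wf p t)
  refine h.congr_deriv ?_
  unfold Ff
  field_simp [Wf_ne_zero p hp ht]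

noncomputable def Qp : ℕ → Polynomial ℝ
  | 0 => Polynomial.X
  | (m+1) => Polynomial.X * (1 - Polynomial.X) * (Qp m).derivative

lemma key (p : ℝ) (hp : p ∈ Icc (0:ℝ) 1) :
    ∀ m : ℕ, ∀ t ∈ Ioo (-(Real.pi/2)) (Real.pi/2),
      iteratedDeriv (m+1) (fun s : ℝ => Complex.log (Wf p s)) t
        = Complex.I ^ (m+1) * ((Qp m).map (algebraMap ℝ ℂ)).eval (Ff p t) := by
  intro m
  induction m with
  | zero =>
    intro t ht
    rw [iteratedDeriv_one, (hasDerivAt_logWf p hp ht).deriv]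
    simp [Qp]
  | succ m ih =>
    intro t ht
    rw [iteratedDeriv_succ]
    have heq : iteratedDeriv (m+1) (fun s : ℝ => Complex.log (Wf p s))
        =ᶠ[nhds t] fun s => Complex.I ^ (m+1) * ((Qp m).map (algebraMap ℝ ℂ)).eval (Ff p s) := by
      filter_upwards [isOpen_Ioo.mem_nhds ht] with s hs using ih s hs
    rw [heq.deriv_eq]
    have hF := hasDerivAt_Ff p hp ht
    have hpoly := (Polynomial.hasDerivAt ((Qp m).map (algebraMap ℝ ℂ)) (Ff p t)).comp t hF
    simp only [Function.comp_def] at hpoly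
    rw [(hpoly.const_mul (Complex.I ^ (m+1))).deriv]
    simp only [Qp, Polynomial.map_mul, Polynomial.map_sub, Polynomial.map_one, Polynomial.map_X,
      Polynomial.eval_mul, Polynomial.eval_sub, Polynomial.eval_one, Polynomial.eval_X,
      Polynomial.derivative_map, Function.comp_def]
    ring

lemma cumulant_bern (p : ℝ) (hp : p ∈ Icc (0:ℝ) 1) (m : ℕ) :
    cumulant (m+1) (bern p) = (((Qp m).eval p : ℝ) : ℂ) := by
  have h0 : (0:ℝ) ∈ Ioo (-(Real.pi/2)) (Real.pi/2) := by
    constructor <;> simp [Real.pi_pos]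
  have hF0 : Ff p 0 = (p : ℂ) := by
    simp [Ff, Wf]
  have hev : ((Qp m).map (algebraMap ℝ ℂ)).eval ((p:ℂ)) = (((Qp m).eval p : ℝ) : ℂ) := by
    rw [show ((p:ℂ)) = algebraMap ℝ ℂ p from rfl, Polynomial.eval_map,
      Polynomial.eval₂_at_apply]
    rfl
  unfold cumulant
  rw [charFun'_bern_s2 p hp, key p hp m 0 h0, hF0, hev, ← mul_assoc,
    zpow_neg, zpow_natCast, inv_mul_cancel₀ (pow_ne_zero _ Complex.I_ne_zero), one_mul]


/-- κ_1(B_p) = p and κ_{r+1}(B_p) = p(1-p)·(d/dp)κ_r(B_p), with κ_r(B_p) viewed as a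
polynomial function of p. -/
theorem cumulant_bernoulli_derivative_recursion :
    (∀ p ∈ Set.Icc (0:ℝ) 1, cumulant 1 (bern p) = (p : ℂ)) ∧
    ∀ r : ℕ, 1 ≤ r →
      ∃ Q : Polynomial ℝ,
        (∀ p ∈ Set.Icc (0:ℝ) 1, cumulant r (bern p) = (Q.eval p : ℝ)) ∧
        (∀ p ∈ Set.Icc (0:ℝ) 1,
          cumulant (r + 1) (bern p) = ((p * (1 - p) * Q.derivative.eval p : ℝ) : ℂ)) := by
  constructor
  · intro p hp
    simpa [Qp] using cumulant_bern p hp 0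
  · intro r hr
    obtain ⟨m, rfl⟩ := Nat.exists_eq_add_of_le hr
    refine ⟨Qp m, ?_, ?_⟩
    · intro p hp
      simpa [add_comm] using cumulant_bern p hp m
    · intro p hp
      have h := cumulant_bern p hp (m+1)
      rw [show 1 + m + 1 = m + 1 + 1 by ring, h]
      norm_cast
      simp [Qp]
end

section
/- Let I be a finite set, a,b ∈ ℝ, r ∈ ℕ₀, c ∈ ℝ^r, and suppose x ∈ [a,b]^I is a local minimiser or maximiser of the power sum S_{r+1}(x) = Σ_{i∈I} x_i^{r+1} on [a,b]^I subject to the constraints S_ℓ(x) = c_ℓ for ℓ = 1,…,r. Then the number of distinct values among the coordinates x_i that lie in the open interval (a,b) is at most r, i.e. #({x_i : i ∈ I} \ {a,b}) ≤ r. -/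
open MeasureTheory Filter

lemma sumPow_hasStrictFDerivAt {k : ℕ} (m : Fin k → ℝ) (n : ℕ) (v : Fin k → ℝ) :
    HasStrictFDerivAt (fun u : Fin k → ℝ => ∑ j, m j * u j ^ (n + 1))
      (∑ j, (m j * (((n : ℝ) + 1) * v j ^ n)) •
        (ContinuousLinearMap.proj j : (Fin k → ℝ) →L[ℝ] ℝ)) v := by
  apply HasStrictFDerivAt.fun_sum
  intro j _
  have h1 : HasStrictFDerivAt (fun u : Fin k → ℝ => u j)
      (ContinuousLinearMap.proj j : (Fin k → ℝ) →L[ℝ] ℝ) v :=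
    (ContinuousLinearMap.proj j : (Fin k → ℝ) →L[ℝ] ℝ).hasStrictFDerivAt
  have h2 : HasStrictDerivAt (fun y : ℝ => y ^ (n + 1)) (((n : ℝ) + 1) * v j ^ n) (v j) := by
    simpa using hasStrictDerivAt_pow (n + 1) (v j)
  have h3 := h2.comp_hasStrictFDerivAt v h1
  have h4 := h3.const_mul (m j)
  simpa [smul_smul, Function.comp] using h4


/-- A local extremiser of S_{r+1} on [a,b]^I subject to the constraints S_ℓ = c_ℓ (ℓ=1,…,r)
has at most r distinct coordinate values in the open interval (a,b). -/
theorem power_sum_local_extremum (I : Type) [Fintype I] [DecidableEq I]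
    (a b : ℝ) (r : ℕ) (c : ℕ → ℝ) (x : I → ℝ)
    (D : Set (I → ℝ))
    (hD : D = {y : I → ℝ | (∀ i, y i ∈ Set.Icc a b) ∧ ∀ ℓ ∈ Finset.Icc 1 r, S ℓ y = c ℓ})
    (hx : x ∈ D)
    (hext : IsLocalMinOn (S (r + 1)) D x ∨ IsLocalMaxOn (S (r + 1)) D x) :
    ((Finset.univ.image x).filter (fun v => v ≠ a ∧ v ≠ b)).card ≤ r := by
  by_contra hcard
  push_neg at hcard
  rw [hD] at hx
  obtain ⟨hbox, hcon⟩ := hx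
  -- pick r+1 distinct values
  obtain ⟨T, hTK, hTcard⟩ := Finset.exists_subset_card_eq hcard
  set v : Fin (r + 1) → ℝ := fun j => (T.orderIsoOfFin hTcard j : ℝ) with hv
  have hvinj : Function.Injective v := fun i j h => by
    have := Subtype.coe_injective h
    exact (T.orderIsoOfFin hTcard).injective this
  have hvK : ∀ j, v j ∈ (Finset.univ.image x).filter (fun w => w ≠ a ∧ w ≠ b) :=
    fun j => hTK (T.orderIsoOfFin hTcard j).2
  have hvx : ∀ j, ∃ i, x i = v j := by
    intro j
    have := hvK j
    rw [Finset.mem_filter, Finset.mem_image] at this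
    obtain ⟨⟨i, _, hi⟩, _⟩ := this
    exact ⟨i, hi⟩
  have hvIoo : ∀ j, v j ∈ Set.Ioo a b := by
    intro j
    have h := hvK j
    rw [Finset.mem_filter] at h
    obtain ⟨i, hi⟩ := hvx j
    have hIcc := hbox i
    rw [hi] at hIcc
    exact ⟨lt_of_le_of_ne hIcc.1 (Ne.symm h.2.1), lt_of_le_of_ne hIcc.2 h.2.2⟩
  -- multiplicities
  set m : Fin (r + 1) → ℝ := fun j => ((Finset.univ.filter (fun i => x i = v j)).card : ℝ)
    with hmdef
  have hm : ∀ j, 0 < m j := by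
    intro j
    obtain ⟨i, hi⟩ := hvx j
    have : i ∈ Finset.univ.filter (fun i => x i = v j) := by simp [hi]
    have h2 := Finset.card_pos.2 ⟨i, this⟩
    simp only [hmdef]
    exact_mod_cast h2
  -- the embedding φ
  set φ : (Fin (r + 1) → ℝ) → I → ℝ :=
    fun u i => x i + ∑ j, (if x i = v j then u j - v j else 0) with hφdef
  have hφv : φ v = x := by
    funext i
    simp only [hφdef]
    rw [Finset.sum_eq_zero, add_zero]
    intro j _
    split <;> simp
  have hφmem : ∀ u i, (∀ j, x i ≠ v j) → φ u i = x i := by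
    intro u i h
    simp only [hφdef]
    rw [Finset.sum_eq_zero, add_zero]
    intro j _
    simp [h j]
  have hφeq : ∀ u i j, x i = v j → φ u i = u j := by
    intro u i j hij
    simp only [hφdef]
    rw [Finset.sum_eq_single_of_mem j (Finset.mem_univ j)]
    · rw [if_pos hij, hij]; ring
    · intro j' _ hj'
      rw [if_neg]
      intro h
      exact hj' (hvinj (h ▸ hij))
  -- sum splitting
  have Ssplit : ∀ (n : ℕ) (u : Fin (r + 1) → ℝ),
      S n (φ u) = (∑ i ∈ Finset.univ.filter (fun i => ∀ j, x i ≠ v j), x i ^ n)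
        + ∑ j, m j * u j ^ n := by
    intro n u
    have h1 : S n (φ u) = (∑ i ∈ Finset.univ.filter (fun i => ∀ j, x i ≠ v j), (φ u i) ^ n)
        + ∑ i ∈ Finset.univ.filter (fun i => ¬ ∀ j, x i ≠ v j), (φ u i) ^ n :=
      (Finset.sum_filter_add_sum_filter_not _ _ _).symm
    rw [h1]
    congr 1
    · exact Finset.sum_congr rfl fun i hi => by
        rw [hφmem u i (Finset.mem_filter.1 hi).2]
    · have hsetsplit : Finset.univ.filter (fun i => ¬ ∀ j, x i ≠ v j)
          = Finset.univ.biUnion (fun j => Finset.univ.filter (fun i => x i = v j)) := by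
        ext i
        simp only [Finset.mem_filter, Finset.mem_biUnion, Finset.mem_univ, true_and]
        push_neg
        rfl
      rw [hsetsplit, Finset.sum_biUnion]
      · refine Finset.sum_congr rfl fun j _ => ?_
        rw [Finset.sum_congr rfl (fun i hi => by
          rw [hφeq u i j (Finset.mem_filter.1 hi).2]), Finset.sum_const, hmdef,
          nsmul_eq_mul]
      · intro j _ j' _ hjj'
        simp only [Finset.disjoint_left, Finset.mem_filter]
        rintro i ⟨_, h1⟩ ⟨_, h2⟩
        exact hjj' (hvinj (h1 ▸ h2))
  -- the constrained set
  set s : Set (Fin (r + 1) → ℝ) :=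
    {u | ∀ ℓ : Fin r, (fun (ℓ : Fin r) (u : Fin (r + 1) → ℝ) =>
      ∑ j, m j * u j ^ ((ℓ : ℕ) + 1)) ℓ u
      = (fun (ℓ : Fin r) (u : Fin (r + 1) → ℝ) => ∑ j, m j * u j ^ ((ℓ : ℕ) + 1)) ℓ v} with hs
  -- continuity of φ
  have hφcont : Continuous φ := by
    apply continuous_pi
    intro i
    apply Continuous.add continuous_const
    apply continuous_finset_sum
    intro j _
    split
    · exact (continuous_apply j).sub continuous_const
    · exact continuous_const
  -- tendsto into D
  have htend : Tendsto φ (nhdsWithin v s) (nhdsWithin x D) := by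
    rw [tendsto_nhdsWithin_iff]
    constructor
    · have h0 : Tendsto φ (nhdsWithin v s) (nhds (φ v)) :=
        (hφcont.tendsto v).mono_left nhdsWithin_le_nhds
      rwa [hφv] at h0
    · have hO : ∀ᶠ u in nhds v, ∀ j, u j ∈ Set.Ioo a b := by
        have hopen : IsOpen {u : Fin (r + 1) → ℝ | ∀ j, u j ∈ Set.Ioo a b} := by
          have : {u : Fin (r + 1) → ℝ | ∀ j, u j ∈ Set.Ioo a b}
              = Set.pi Set.univ (fun _ => Set.Ioo a b) := by
            ext u; simp [Set.mem_pi]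
          rw [this]
          exact isOpen_set_pi Set.finite_univ (fun _ _ => isOpen_Ioo)
        exact hopen.eventually_mem (fun j => hvIoo j)
      filter_upwards [eventually_nhdsWithin_of_eventually_nhds hO,
        self_mem_nhdsWithin] with u hu hus
      rw [hD]
      constructor
      · intro i
        by_cases h : ∀ j, x i ≠ v j
        · rw [hφmem u i h]; exact hbox i
        · push_neg at h
          obtain ⟨j, hj⟩ := h
          rw [hφeq u i j hj]
          exact Set.Ioo_subset_Icc_self (hu j)
      · intro ℓ hℓ
        rw [Finset.mem_Icc] at hℓ
        have hℓ1 : ℓ - 1 < r := by omega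
        have hconstr := hus ⟨ℓ - 1, hℓ1⟩
        simp only at hconstr
        have hexp : (ℓ - 1) + 1 = ℓ := by omega
        rw [hexp] at hconstr
        rw [Ssplit ℓ u, hconstr, ← Ssplit ℓ v, hφv]
        exact hcon ℓ (Finset.mem_Icc.2 hℓ)
  -- local extremum of reduced problem
  have hextr : IsLocalExtrOn (fun u : Fin (r + 1) → ℝ => ∑ j, m j * u j ^ (r + 1)) s v := by
    have key : ∀ (u : Fin (r + 1) → ℝ),
        S (r + 1) (φ u) = (∑ i ∈ Finset.univ.filter (fun i => ∀ j, x i ≠ v j), x i ^ (r + 1))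
          + ∑ j, m j * u j ^ (r + 1) := fun u => Ssplit (r + 1) u
    rcases hext with hmin | hmax
    · left
      have := htend.eventually hmin
      rw [← hφv] at this
      filter_upwards [this] with u hu
      have h1 := key u
      have h2 := key v
      simp only [hφv] at h1 h2 hu ⊢
      linarith [hu]
    · right
      have := htend.eventually hmax
      rw [← hφv] at this
      filter_upwards [this] with u hu
      have h1 := key u
      have h2 := key v
      simp only [hφv] at h1 h2 hu ⊢
      linarith [hu]
  -- Lagrange multipliers
  obtain ⟨Λ, Λ₀, hne, hsum⟩ := hextr.exists_multipliers_of_hasStrictFDerivAt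
    (f' := fun ℓ : Fin r => ∑ j, (m j * ((((ℓ : ℕ) : ℝ) + 1) * v j ^ (ℓ : ℕ))) •
      (ContinuousLinearMap.proj j : (Fin (r + 1) → ℝ) →L[ℝ] ℝ))
    (fun ℓ => sumPow_hasStrictFDerivAt m (ℓ : ℕ) v)
    (φ' := ∑ j, (m j * (((r : ℝ) + 1) * v j ^ r)) •
      (ContinuousLinearMap.proj j : (Fin (r + 1) → ℝ) →L[ℝ] ℝ))
    (sumPow_hasStrictFDerivAt m r v)
  -- evaluate at basis vectors
  have heval : ∀ j₀ : Fin (r + 1),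
      (∑ ℓ : Fin r, Λ ℓ * ((((ℓ : ℕ) : ℝ) + 1) * v j₀ ^ (ℓ : ℕ)))
        + Λ₀ * (((r : ℝ) + 1) * v j₀ ^ r) = 0 := by
    intro j₀
    have := ContinuousLinearMap.ext_iff.1 hsum (Pi.single j₀ 1)
    simp only [ContinuousLinearMap.coe_sum', ContinuousLinearMap.coe_smul',
      Finset.sum_apply, Pi.smul_apply, ContinuousLinearMap.add_apply,
      ContinuousLinearMap.coe_zero, Pi.zero_apply, ContinuousLinearMap.coe_add',
      Pi.add_apply, ContinuousLinearMap.proj_apply, smul_eq_mul] at this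
    simp only [Pi.single_apply, mul_ite, mul_one, mul_zero, Finset.sum_ite_eq',
      Finset.mem_univ, if_pos, ContinuousLinearMap.zero_apply] at this
    have hmne : m j₀ ≠ 0 := ne_of_gt (hm j₀)
    have hfactor : (∑ ℓ : Fin r, Λ ℓ * (m j₀ * ((((ℓ : ℕ) : ℝ) + 1) * v j₀ ^ (ℓ : ℕ))))
        + Λ₀ * (m j₀ * (((r : ℝ) + 1) * v j₀ ^ r))
        = m j₀ * ((∑ ℓ : Fin r, Λ ℓ * ((((ℓ : ℕ) : ℝ) + 1) * v j₀ ^ (ℓ : ℕ)))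
          + Λ₀ * (((r : ℝ) + 1) * v j₀ ^ r)) := by
      rw [mul_add, Finset.mul_sum]
      congr 1
      · exact Finset.sum_congr rfl fun ℓ _ => by ring
      · ring
    rw [hfactor] at this
    rcases mul_eq_zero.1 this with h | h
    · exact absurd h hmne
    · exact h
  -- build coefficient vector and apply vandermonde
  set μ : Fin (r + 1) → ℝ := fun k =>
    if h : (k : ℕ) < r then Λ ⟨k, h⟩ * (((k : ℕ) : ℝ) + 1) else Λ₀ * ((r : ℝ) + 1) with hμ
  have hμzero : μ = 0 := by
    apply Matrix.eq_zero_of_forall_index_sum_mul_pow_eq_zero hvinj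
    intro j
    rw [Fin.sum_univ_castSucc]
    have hlast : μ (Fin.last r) = Λ₀ * ((r : ℝ) + 1) := by
      rw [hμ]; simp
    have hcast : ∀ k : Fin r, μ k.castSucc = Λ k * (((k : ℕ) : ℝ) + 1) := by
      intro k
      have hk : ((k.castSucc : Fin (r+1)) : ℕ) < r := by simpa using k.2
      simp only [hμ, Fin.coe_castSucc]
      rw [dif_pos k.2]
    rw [hlast]
    have : ∑ k : Fin r, μ k.castSucc * v j ^ ((k.castSucc : ℕ))
        = ∑ k : Fin r, Λ k * ((((k : ℕ) : ℝ) + 1) * v j ^ (k : ℕ)) := by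
      refine Finset.sum_congr rfl fun k _ => ?_
      rw [hcast k]
      simp [Fin.coe_castSucc]
      ring
    rw [this]
    have := heval j
    simp only [Fin.val_last]
    linarith [heval j]
  -- contradiction
  apply hne
  have hΛ : Λ = 0 := by
    funext ℓ
    have h1 : μ ℓ.castSucc = 0 := by rw [hμzero]; rfl
    rw [hμ] at h1
    simp only [Fin.coe_castSucc, ℓ.2, dif_pos] at h1
    have hpos : (0 : ℝ) < ((ℓ : ℕ) : ℝ) + 1 := by positivity
    have := mul_eq_zero.1 h1
    rcases this with h | h
    · simpa using h
    · exact absurd h (ne_of_gt hpos)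
  have hΛ₀ : Λ₀ = 0 := by
    have h1 : μ (Fin.last r) = 0 := by rw [hμzero]; rfl
    rw [hμ] at h1
    simp only [Fin.val_last, lt_irrefl, dif_neg, not_lt, le_refl] at h1
    have hpos : (0 : ℝ) < (r : ℝ) + 1 := by positivity
    rcases mul_eq_zero.1 h1 with h | h
    · exact h
    · exact absurd h (ne_of_gt hpos)
  rw [hΛ, hΛ₀]
  rfl
end

section
/- Let I be a finite set with n = #I, and let f : [0,1]^I → ℝ be permutation invariant in its n variables and affine-linear in each variable separately. Then f is a polynomial function; more precisely, there exists b ∈ ℝ^{n+1} such that f(p) = Σ_{k=0}^{n} b_k E_k(p) for all p ∈ [0,1]^I, where E_k is the k-th elementary symmetric polynomial. -/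
open MeasureTheory

section SymmetricMultiaffineAux

set_option linter.unusedSectionVars false

variable {I : Type} [Fintype I] [DecidableEq I]

private lemma update_cube {p : I → ℝ} (hp : ∀ i, p i ∈ Set.Icc (0:ℝ) 1) (a : I) {t : ℝ}
    (ht : t ∈ Set.Icc (0:ℝ) 1) : ∀ i, Function.update p a t i ∈ Set.Icc (0:ℝ) 1 := by
  intro i
  rcases eq_or_ne i a with rfl | h
  · simpa using ht
  · simpa [Function.update_of_ne h] using hp i

private lemma affine_interp (f : (I → ℝ) → ℝ)
    (haff : ∀ (i : I) (p : I → ℝ), (∀ j, p j ∈ Set.Icc (0:ℝ) 1) →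
      ∃ α β : ℝ, ∀ t ∈ Set.Icc (0:ℝ) 1, f (Function.update p i t) = α + β * t)
    (a : I) (p : I → ℝ) (hp : ∀ i, p i ∈ Set.Icc (0:ℝ) 1) :
    f p = (1 - p a) * f (Function.update p a 0) + p a * f (Function.update p a 1) := by
  obtain ⟨α, β, h⟩ := haff a p hp
  have h0 := h 0 (by norm_num)
  have h1 := h 1 (by norm_num)
  have hpa := h (p a) (hp a)
  rw [Function.update_eq_self] at hpa
  rw [hpa, h0, h1]; ring

private lemma vertex_expansion (f : (I → ℝ) → ℝ)
    (haff : ∀ (i : I) (p : I → ℝ), (∀ j, p j ∈ Set.Icc (0:ℝ) 1) →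
      ∃ α β : ℝ, ∀ t ∈ Set.Icc (0:ℝ) 1, f (Function.update p i t) = α + β * t)
    (s : Finset I) :
    ∀ p : I → ℝ, (∀ i, p i ∈ Set.Icc (0:ℝ) 1) →
      f p = ∑ J ∈ s.powerset, (∏ i ∈ J, p i) *
        ∑ K ∈ J.powerset, (-1:ℝ)^((J \ K).card) *
          f (fun i => if i ∈ s then (if i ∈ K then (1:ℝ) else 0) else p i) := by
  induction s using Finset.induction_on with
  | empty => intro p hp; simp
  | @insert a s ha ih =>
    intro p hp
    set g : Finset I → (I → ℝ) :=
      fun K => fun i => if i ∈ insert a s then (if i ∈ K then (1:ℝ) else 0) else p i with hg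
    set i0 : Finset I → ℝ :=
      fun J => ∑ K ∈ J.powerset, (-1:ℝ)^((J \ K).card) * f (g K) with hi0
    set i1 : Finset I → ℝ :=
      fun J => ∑ K ∈ J.powerset, (-1:ℝ)^((J \ K).card) * f (g (insert a K)) with hi1
    have hp0 : ∀ i, Function.update p a 0 i ∈ Set.Icc (0:ℝ) 1 :=
      update_cube hp a (by norm_num)
    have hp1 : ∀ i, Function.update p a 1 i ∈ Set.Icc (0:ℝ) 1 :=
      update_cube hp a (by norm_num)
    -- value of f at the two endpoint slices
    have hT0 : f (Function.update p a 0) = ∑ J ∈ s.powerset, (∏ i ∈ J, p i) * i0 J := by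
      rw [ih (Function.update p a 0) hp0]
      refine Finset.sum_congr rfl ?_
      intro J hJ
      have haJ : a ∉ J := fun h => ha ((Finset.mem_powerset.mp hJ) h)
      congr 1
      · exact Finset.prod_congr rfl fun i hi =>
          Function.update_of_ne (by rintro rfl; exact haJ hi) _ _
      · refine Finset.sum_congr rfl fun K hK => ?_
        have haK : a ∉ K := fun h => haJ ((Finset.mem_powerset.mp hK) h)
        refine congrArg (fun x => _ * f x) (funext fun i => ?_)
        by_cases his : i ∈ s
        · simp [his, Finset.mem_insert, g]
        · rcases eq_or_ne i a with rfl | hia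
          · simp [his, haK, g, ha]
          · simp [his, hia, g, Function.update_of_ne hia]
    have hT1 : f (Function.update p a 1) = ∑ J ∈ s.powerset, (∏ i ∈ J, p i) * i1 J := by
      rw [ih (Function.update p a 1) hp1]
      refine Finset.sum_congr rfl ?_
      intro J hJ
      have haJ : a ∉ J := fun h => ha ((Finset.mem_powerset.mp hJ) h)
      congr 1
      · exact Finset.prod_congr rfl fun i hi =>
          Function.update_of_ne (by rintro rfl; exact haJ hi) _ _
      · refine Finset.sum_congr rfl fun K hK => ?_
        have haK : a ∉ K := fun h => haJ ((Finset.mem_powerset.mp hK) h)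
        refine congrArg (fun x => _ * f x) (funext fun i => ?_)
        by_cases his : i ∈ s
        · have hia : i ≠ a := by rintro rfl; exact ha his
          simp [his, hia, Finset.mem_insert, g]
        · rcases eq_or_ne i a with rfl | hia
          · simp [his, g]
          · simp [his, hia, g, Function.update_of_ne hia]
    -- expand the RHS
    rw [Finset.sum_powerset_insert ha]
    have hsnd : ∀ J ∈ s.powerset,
        (∏ i ∈ insert a J, p i) *
          ∑ K ∈ (insert a J).powerset, (-1:ℝ)^(((insert a J) \ K).card) * f (g K)
        = p a * ((∏ i ∈ J, p i) * (i1 J - i0 J)) := by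
      intro J hJ
      have haJ : a ∉ J := fun h => ha ((Finset.mem_powerset.mp hJ) h)
      rw [Finset.prod_insert haJ, Finset.sum_powerset_insert haJ]
      have e1 : ∑ K ∈ J.powerset, (-1:ℝ)^(((insert a J) \ K).card) * f (g K) = - i0 J := by
        rw [hi0, ← Finset.sum_neg_distrib]
        refine Finset.sum_congr rfl fun K hK => ?_
        have haK : a ∉ K := fun h => haJ ((Finset.mem_powerset.mp hK) h)
        have hd : (insert a J) \ K = insert a (J \ K) :=
          Finset.insert_sdiff_of_notMem J haK
        rw [hd, Finset.card_insert_of_notMem (by simp [Finset.mem_sdiff, haJ])]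
        ring
      have e2 : ∑ K ∈ J.powerset, (-1:ℝ)^(((insert a J) \ (insert a K)).card) * f (g (insert a K))
          = i1 J := by
        rw [hi1]
        refine Finset.sum_congr rfl fun K hK => ?_
        have hd : (insert a J) \ (insert a K) = J \ K := by
          rw [Finset.insert_sdiff_insert, Finset.sdiff_insert_of_notMem haJ]
        rw [hd]
      rw [e1, e2]; ring
    rw [Finset.sum_congr rfl hsnd]
    have : ∑ J ∈ s.powerset, p a * ((∏ i ∈ J, p i) * (i1 J - i0 J))
        = p a * ((∑ J ∈ s.powerset, (∏ i ∈ J, p i) * i1 J)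
            - ∑ J ∈ s.powerset, (∏ i ∈ J, p i) * i0 J) := by
      rw [← Finset.mul_sum, ← Finset.sum_sub_distrib]
      congr 1
      exact Finset.sum_congr rfl fun J _ => by ring
    rw [this, ← hT0, ← hT1, affine_interp f haff a p hp]
    ring

private def chi (J : Finset I) : I → ℝ := fun i => if i ∈ J then 1 else 0

private lemma chi_cube (J : Finset I) : ∀ i, chi J i ∈ Set.Icc (0:ℝ) 1 := by
  intro i
  unfold chi
  by_cases h : i ∈ J <;> simp [h]

private lemma vertex_symm (f : (I → ℝ) → ℝ)
    (hsym : ∀ σ : Equiv.Perm I, ∀ p : I → ℝ, (∀ i, p i ∈ Set.Icc (0:ℝ) 1) →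
      f (p ∘ σ) = f p)
    {J K : Finset I} (h : J.card = K.card) : f (chi J) = f (chi K) := by
  have hc : Kᶜ.card = Jᶜ.card := by
    rw [Finset.card_compl, Finset.card_compl, h]
  have e : {x // x ∈ K} ≃ {x // x ∈ J} := Finset.equivOfCardEq h.symm
  have e' : {x // ¬ x ∈ K} ≃ {x // ¬ x ∈ J} :=
    ((Equiv.subtypeEquivRight (p := fun x => ¬ x ∈ K) (q := fun x => x ∈ Kᶜ)
        (fun x => Finset.mem_compl.symm)).trans
      (Finset.equivOfCardEq hc)).trans
      (Equiv.subtypeEquivRight (p := fun x => x ∈ Jᶜ) (q := fun x => ¬ x ∈ J)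
        (fun x => Finset.mem_compl))
  set σ : Equiv.Perm I := Equiv.subtypeCongr e e' with hσ
  have key : chi J ∘ σ = chi K := by
    funext i
    by_cases hi : i ∈ K
    · have hσi : σ i = (e ⟨i, hi⟩ : I) := by
        simp [hσ, Equiv.subtypeCongr, hi]
      have : (σ i) ∈ J := by rw [hσi]; exact (e ⟨i, hi⟩).2
      simp [chi, Function.comp, this, hi]
    · have hσi : σ i = (e' ⟨i, hi⟩ : I) := by
        simp [hσ, Equiv.subtypeCongr, hi]
      have : ¬ (σ i) ∈ J := by rw [hσi]; exact (e' ⟨i, hi⟩).2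
      simp [chi, Function.comp, this, hi]
  have := hsym σ (chi J) (chi_cube J)
  rw [key] at this
  exact this.symm

end SymmetricMultiaffineAux

/-- A permutation-invariant, separately affine-linear function on [0,1]^I is a linear
combination of the elementary symmetric polynomials. -/
theorem symmetric_multiaffine_eq_elementary_combination
    (I : Type) [Fintype I] [DecidableEq I] (n : ℕ) (hn : n = Fintype.card I)
    (f : (I → ℝ) → ℝ)
    (hsym : ∀ σ : Equiv.Perm I, ∀ p : I → ℝ, (∀ i, p i ∈ Set.Icc (0:ℝ) 1) →
      f (p ∘ σ) = f p)
    (haff : ∀ (i : I) (p : I → ℝ), (∀ j, p j ∈ Set.Icc (0:ℝ) 1) →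
      ∃ α β : ℝ, ∀ t ∈ Set.Icc (0:ℝ) 1, f (Function.update p i t) = α + β * t) :
    ∃ b : ℕ → ℝ, ∀ p : I → ℝ, (∀ i, p i ∈ Set.Icc (0:ℝ) 1) →
      f p = ∑ k ∈ Finset.range (n + 1), b k * E k p := by

  classical
  -- value of f at a vertex of given weight
  set A : ℕ → ℝ := fun k =>
    if h : ∃ J : Finset I, J.card = k then f (chi h.choose) else 0 with hA
  have hAval : ∀ K : Finset I, f (chi K) = A K.card := by
    intro K
    have h : ∃ J : Finset I, J.card = K.card := ⟨K, rfl⟩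
    rw [hA]
    simp only [dif_pos h]
    exact vertex_symm f hsym h.choose_spec.symm
  -- the coefficients
  set B : ℕ → ℝ := fun m =>
    ∑ j ∈ Finset.range (m + 1), (m.choose j : ℝ) * ((-1:ℝ) ^ (m - j) * A j) with hB
  have hBval : ∀ J : Finset I,
      (∑ K ∈ J.powerset, (-1:ℝ)^((J \ K).card) * f (chi K)) = B J.card := by
    intro J
    have step : ∀ K ∈ J.powerset,
        (-1:ℝ)^((J \ K).card) * f (chi K) = (-1:ℝ) ^ (J.card - K.card) * A K.card := by
      intro K hK
      rw [Finset.card_sdiff_of_subset (Finset.mem_powerset.mp hK), hAval K]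
    rw [Finset.sum_congr rfl step, Finset.sum_powerset_apply_card
      (fun m => (-1:ℝ) ^ (J.card - m) * A m), hB]
    exact Finset.sum_congr rfl fun j _ => by rw [nsmul_eq_mul]
  refine ⟨B, fun p hp => ?_⟩
  have expand := vertex_expansion f haff Finset.univ p hp
  have hchi : ∀ K : Finset I,
      (fun i => if i ∈ (Finset.univ : Finset I) then (if i ∈ K then (1:ℝ) else 0) else p i)
        = chi K := by
    intro K; funext i; simp [chi]
  rw [expand]
  have expand2 : ∀ J ∈ (Finset.univ : Finset I).powerset,
      (∏ i ∈ J, p i) * (∑ K ∈ J.powerset, (-1:ℝ)^((J \ K).card) *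
          f (fun i => if i ∈ (Finset.univ : Finset I) then (if i ∈ K then (1:ℝ) else 0) else p i))
        = (∏ i ∈ J, p i) * B J.card := by
    intro J _
    congr 1
    rw [← hBval J]
    exact Finset.sum_congr rfl fun K _ => by rw [hchi K]
  rw [Finset.sum_congr rfl expand2, Finset.sum_powerset]
  have hcard : (Finset.univ : Finset I).card = n := by rw [Finset.card_univ, hn]
  rw [hcard]
  refine Finset.sum_congr rfl fun k hk => ?_
  rw [E, Finset.mul_sum]
  refine Finset.sum_congr rfl fun J hJ => ?_
  rw [(Finset.mem_powersetCard.mp hJ).2, mul_comm]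
end

section
/- Let I be a finite set with n = #I, p ∈ [0,1]^I, and let BC_p denote the Bernoulli convolution ∗_{i∈I} B_{p_i}. Then for each k ∈ {0,…,n}, the k-th elementary symmetric polynomial satisfies E_k(p) = ∫ C(x,k) dBC_p(x), where C(x,k) is the binomial coefficient and the integral is over {0,…,n}. -/
open MeasureTheory

/-! ### Auxiliary lemmas -/

lemma aux_prod_smul_right (μ ν : Measure ℝ) [SFinite μ] [SFinite ν] (c : ENNReal) :
    μ.prod (c • ν) = c • μ.prod ν := by
  ext s hs
  rw [Measure.prod_apply hs, Measure.smul_apply, Measure.prod_apply hs, smul_eq_mul,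
    ← MeasureTheory.lintegral_const_mul _ (measurable_measure_prodMk_left hs)]
  simp [Measure.smul_apply]

lemma aux_mconv_bern (μ : Measure ℝ) [SFinite μ] (q : ℝ) :
    mconv μ (bern q) =
      ENNReal.ofReal (1 - q) • μ + ENNReal.ofReal q • μ.map (· + 1) := by
  unfold mconv bern
  rw [Measure.prod_add, aux_prod_smul_right, aux_prod_smul_right,
    Measure.map_add _ _ (by fun_prop), Measure.map_smul, Measure.map_smul,
    Measure.prod_dirac, Measure.prod_dirac,
    Measure.map_map (by fun_prop) (by fun_prop), Measure.map_map (by fun_prop) (by fun_prop)]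
  have h0 : ((fun x : ℝ × ℝ => x.1 + x.2) ∘ fun x : ℝ => (x, (0:ℝ))) = id := by
    funext x; simp
  have h1 : ((fun x : ℝ × ℝ => x.1 + x.2) ∘ fun x : ℝ => (x, (1:ℝ))) = (· + 1) := by
    funext x; simp
  rw [h0, h1, Measure.map_id]

/-- the `ℝ≥0∞`-valued weight of a subset -/
noncomputable def W {n : ℕ} (p : Fin n → ℝ) (J : Finset (Fin n)) : ENNReal :=
  ∏ i : Fin n, (if i ∈ J then ENNReal.ofReal (p i) else ENNReal.ofReal (1 - p i))

lemma aux_map_sum_smul_dirac {ι : Type*} (s : Finset ι) (c : ι → ENNReal) (a : ι → ℝ)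
    {f : ℝ → ℝ} (hf : Measurable f) :
    (∑ J ∈ s, c J • Measure.dirac (a J)).map f
      = ∑ J ∈ s, c J • Measure.dirac (f (a J)) := by
  classical
  induction s using Finset.induction_on with
  | empty => simp
  | insert _ _ h ih =>
    rw [Finset.sum_insert h, Finset.sum_insert h, Measure.map_add _ _ hf,
      Measure.map_smul, Measure.map_dirac' hf, ih]

lemma aux_sum_powerset_map {M : Type*} [AddCommMonoid M] {n : ℕ}
    (f : Fin n ↪ Fin (n + 1)) (g : Finset (Fin (n + 1)) → M) :
    ∑ J ∈ (Finset.univ.map f).powerset, g J = ∑ J : Finset (Fin n), g (J.map f) := by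
  refine Finset.sum_nbij'
    (i := fun J : Finset (Fin (n+1)) => J.preimage f f.injective.injOn)
    (j := fun J : Finset (Fin n) => J.map f) ?_ ?_ ?_ ?_ ?_
  · intro J _; exact Finset.mem_univ _
  · intro J _; exact Finset.mem_powerset.mpr (Finset.map_subset_map.mpr (Finset.subset_univ J))
  · intro J hJ
    obtain ⟨u, -, rfl⟩ := Finset.subset_map_iff.mp (Finset.mem_powerset.mp hJ)
    simp only [Finset.preimage_map]
  · intro J _; exact Finset.preimage_map f J
  · intro J hJ
    obtain ⟨u, -, rfl⟩ := Finset.subset_map_iff.mp (Finset.mem_powerset.mp hJ)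
    simp only [Finset.preimage_map]

lemma aux_last_not_mem {n : ℕ} : Fin.last n ∉ Finset.univ.map Fin.castSuccEmb := by
  simp only [Finset.mem_map, Finset.mem_univ, true_and, Fin.castSuccEmb_apply]
  rintro ⟨i, hi⟩
  exact absurd hi (Fin.castSucc_lt_last i).ne

instance aux_bern_sfinite (q : ℝ) : SFinite (bern q) := by
  unfold bern; infer_instance

lemma aux_sfinite : ∀ (n : ℕ) (p : Fin n → ℝ), SFinite (BC n p) := by
  intro n
  induction n with
  | zero => intro p; simp only [BC]; infer_instance
  | succ n ih =>
    intro p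
    simp only [BC]
    haveI := ih (fun i => p i.castSucc)
    unfold mconv
    infer_instance

lemma aux_BC_eq (n : ℕ) (p : Fin n → ℝ) :
    BC n p = ∑ J : Finset (Fin n), W p J • Measure.dirac ((J.card : ℝ)) := by
  induction n with
  | zero =>
    simp [BC, W, show (default : Finset (Fin 0)) = (∅ : Finset (Fin 0)) from rfl]
  | succ n ih =>
    haveI := aux_sfinite n (fun i => p i.castSucc)
    rw [BC, aux_mconv_bern, ih, aux_map_sum_smul_dirac _ _ _ (by fun_prop),
      Finset.smul_sum, Finset.smul_sum]
    conv_rhs => rw [← Finset.powerset_univ, Fin.univ_castSuccEmb, Finset.cons_eq_insert,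
      Finset.sum_powerset_insert aux_last_not_mem,
      aux_sum_powerset_map, aux_sum_powerset_map]
    congr 1
    · refine Finset.sum_congr rfl fun J _ => ?_
      rw [smul_smul, Finset.card_map]
      congr 1
      have hnm : Fin.last n ∉ J.map Fin.castSuccEmb := fun h =>
        aux_last_not_mem (Finset.map_subset_map.mpr (Finset.subset_univ J) h)
      simp only [W]
      rw [Fin.univ_castSuccEmb, Finset.prod_cons, if_neg hnm, Finset.prod_map]
      congr 1
      refine Finset.prod_congr rfl fun i _ => ?_
      by_cases h : i ∈ J
      · rw [if_pos h, if_pos (Finset.mem_map_of_mem _ h)]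
        rfl
      · rw [if_neg h, if_neg (fun hc => h ((Finset.mem_map' _).mp hc))]
        rfl
    · refine Finset.sum_congr rfl fun J _ => ?_
      rw [smul_smul]
      have hnotmem : Fin.last n ∉ J.map Fin.castSuccEmb := fun h =>
        aux_last_not_mem (Finset.map_subset_map.mpr (Finset.subset_univ J) h)
      have hcard : ((insert (Fin.last n) (J.map Fin.castSuccEmb)).card : ℝ)
          = (J.card : ℝ) + 1 := by
        rw [Finset.card_insert_of_notMem hnotmem, Finset.card_map]
        push_cast; ring
      rw [hcard]
      congr 1
      simp only [W]
      rw [Fin.univ_castSuccEmb, Finset.prod_cons, if_pos (Finset.mem_insert_self _ _),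
        Finset.prod_map]
      congr 1
      refine Finset.prod_congr rfl fun i _ => ?_
      by_cases h : i ∈ J
      · rw [if_pos h, if_pos (Finset.mem_insert_of_mem (Finset.mem_map_of_mem _ h))]
        rfl
      · have hne : Fin.castSuccEmb i ∉ insert (Fin.last n) (J.map Fin.castSuccEmb) := by
          intro hc
          rcases Finset.mem_insert.mp hc with h' | h'
          · exact absurd h' (Fin.castSucc_lt_last i).ne
          · exact h ((Finset.mem_map' _).mp h')
        rw [if_neg h, if_neg hne]
        rfl

lemma aux_integrable_dirac {f : ℝ → ℝ} (hf : Measurable f) (a : ℝ) :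
    Integrable f (Measure.dirac a) := by
  refine ⟨hf.aestronglyMeasurable, ?_⟩
  have : (∫⁻ x, ‖f x‖ₑ ∂(Measure.dirac a)) = ‖f a‖ₑ :=
    lintegral_dirac' a (by fun_prop)
  rw [HasFiniteIntegral, this]
  exact enorm_lt_top

lemma aux_W_ne_top {n : ℕ} (p : Fin n → ℝ) (J : Finset (Fin n)) : W p J ≠ ⊤ := by
  rw [W]
  refine (ENNReal.prod_lt_top fun i _ => ?_).ne
  split_ifs <;> exact ENNReal.ofReal_lt_top

lemma aux_W_toReal {n : ℕ} (p : Fin n → ℝ) (hp : ∀ i, p i ∈ Set.Icc (0:ℝ) 1)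
    (J : Finset (Fin n)) :
    (W p J).toReal = ∏ i : Fin n, (if i ∈ J then p i else 1 - p i) := by
  rw [W, ENNReal.toReal_prod]
  refine Finset.prod_congr rfl fun i _ => ?_
  rcases hp i with ⟨h0, h1⟩
  split_ifs
  · exact ENNReal.toReal_ofReal h0
  · exact ENNReal.toReal_ofReal (by linarith)

lemma aux_integral_BC (n : ℕ) (p : Fin n → ℝ) (hp : ∀ i, p i ∈ Set.Icc (0:ℝ) 1)
    {f : ℝ → ℝ} (hf : Measurable f) :
    ∫ x, f x ∂(BC n p)
      = ∑ J : Finset (Fin n),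
          (∏ i : Fin n, (if i ∈ J then p i else 1 - p i)) * f ((J.card : ℝ)) := by
  rw [aux_BC_eq, integral_finset_sum_measure (fun J _ =>
    (aux_integrable_dirac hf _).smul_measure (aux_W_ne_top p J))]
  refine Finset.sum_congr rfl fun J _ => ?_
  rw [integral_smul_measure, integral_dirac, aux_W_toReal p hp, smul_eq_mul]

lemma aux_prod_range_sub (k : ℕ) (x : ℝ) :
    ∏ j ∈ Finset.range k, (x - (j : ℝ)) = (descPochhammer ℝ k).eval x := by
  induction k with
  | zero => simp
  | succ k ih => rw [Finset.prod_range_succ, ih, descPochhammer_succ_eval]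

lemma aux_choose_eval (k m : ℕ) :
    (∏ j ∈ Finset.range k, ((m : ℝ) - (j : ℝ))) / (Nat.factorial k : ℝ)
      = (m.choose k : ℝ) := by
  rw [aux_prod_range_sub, descPochhammer_eval_eq_descFactorial,
    Nat.descFactorial_eq_factorial_mul_choose]
  have h : (Nat.factorial k : ℝ) ≠ 0 := Nat.cast_ne_zero.mpr (Nat.factorial_ne_zero k)
  rw [Nat.cast_mul, mul_comm, mul_div_assoc, div_self h, mul_one]

lemma aux_inner_sum {I : Type*} [Fintype I] [DecidableEq I] (p : I → ℝ) (K : Finset I) :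
    ∑ J ∈ Finset.univ.filter (fun J : Finset I => K ⊆ J),
        ∏ i : I, (if i ∈ J then p i else 1 - p i)
      = ∏ i ∈ K, p i := by
  have key : ∀ J ∈ Finset.univ.filter (fun J : Finset I => K ⊆ J),
      (∏ i : I, (if i ∈ J then p i else 1 - p i))
        = (∏ i ∈ K, p i) * ∏ i ∈ Kᶜ, (if i ∈ J \ K then p i else 1 - p i) := by
    intro J hJ
    have hK : K ⊆ J := (Finset.mem_filter.mp hJ).2
    rw [← Finset.prod_mul_prod_compl K]
    congr 1
    · refine Finset.prod_congr rfl fun i hi => ?_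
      rw [if_pos (hK hi)]
    · refine Finset.prod_congr rfl fun i hi => ?_
      have : i ∈ J \ K ↔ i ∈ J := by
        rw [Finset.mem_sdiff]
        exact ⟨fun h => h.1, fun h => ⟨h, (Finset.mem_compl.mp hi)⟩⟩
      simp only [this]
  rw [Finset.sum_congr rfl key, ← Finset.mul_sum]
  have reindex : ∑ J ∈ Finset.univ.filter (fun J : Finset I => K ⊆ J),
      ∏ i ∈ Kᶜ, (if i ∈ J \ K then p i else 1 - p i)
      = ∑ L ∈ Kᶜ.powerset, ∏ i ∈ Kᶜ, (if i ∈ L then p i else 1 - p i) := by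
    refine Finset.sum_nbij' (i := fun J => J \ K) (j := fun L => K ∪ L) ?_ ?_ ?_ ?_ ?_
    · intro J hJ
      refine Finset.mem_powerset.mpr fun i hi => ?_
      rw [Finset.mem_sdiff] at hi
      exact Finset.mem_compl.mpr hi.2
    · intro L hL
      exact Finset.mem_filter.mpr ⟨Finset.mem_univ _, Finset.subset_union_left⟩
    · intro J hJ
      exact Finset.union_sdiff_of_subset (Finset.mem_filter.mp hJ).2
    · intro L hL
      refine Finset.union_sdiff_cancel_left ?_
      rw [Finset.disjoint_left]
      intro a haK haL
      exact absurd haK (Finset.mem_compl.mp ((Finset.mem_powerset.mp hL) haL))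
    · intro J hJ
      rfl
  rw [reindex]
  have expand : ∀ L ∈ Kᶜ.powerset,
      (∏ i ∈ Kᶜ, (if i ∈ L then p i else 1 - p i))
        = (∏ i ∈ L, p i) * ∏ i ∈ Kᶜ \ L, (1 - p i) := by
    intro L hL
    rw [← Finset.prod_sdiff (Finset.mem_powerset.mp hL), mul_comm]
    congr 1
    · exact Finset.prod_congr rfl fun i hi => if_pos hi
    · exact Finset.prod_congr rfl fun i hi => if_neg (Finset.mem_sdiff.mp hi).2
  rw [Finset.sum_congr rfl expand, ← Finset.prod_add]
  simp

lemma aux_comb {I : Type*} [Fintype I] [DecidableEq I] (p : I → ℝ) (k : ℕ) :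
    ∑ J : Finset I,
        (∏ i : I, (if i ∈ J then p i else 1 - p i)) * ((J.card.choose k : ℕ) : ℝ)
      = E k p := by
  have h1 : ∀ J : Finset I, ((J.card.choose k : ℕ) : ℝ) = ∑ _K ∈ J.powersetCard k, (1 : ℝ) := by
    intro J
    rw [Finset.sum_const, Finset.card_powersetCard, nsmul_eq_mul, mul_one]
  calc
    ∑ J : Finset I, (∏ i : I, (if i ∈ J then p i else 1 - p i)) * ((J.card.choose k : ℕ) : ℝ)
        = ∑ J : Finset I, ∑ _K ∈ J.powersetCard k,
            ∏ i : I, (if i ∈ J then p i else 1 - p i) := by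
          refine Finset.sum_congr rfl fun J _ => ?_
          rw [h1, Finset.mul_sum]
          simp
    _ = ∑ K ∈ Finset.univ.powersetCard k,
          ∑ J ∈ Finset.univ.filter (fun J : Finset I => K ⊆ J),
            ∏ i : I, (if i ∈ J then p i else 1 - p i) := by
          refine Finset.sum_comm' fun J K => ?_
          simp only [Finset.mem_univ, true_and, Finset.mem_powersetCard, Finset.mem_filter,
            Finset.subset_univ, and_true]
    _ = ∑ K ∈ Finset.univ.powersetCard k, ∏ i ∈ K, p i := by
          exact Finset.sum_congr rfl fun K _ => aux_inner_sum p K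
    _ = E k p := rfl

/-- E_k(p) = ∫ C(x,k) dBC_p(x), where C(x,k) = x(x-1)⋯(x-k+1)/k! is the (generalized)
binomial coefficient and BC_p is supported on {0,…,n}. -/
theorem elementary_symmetric_eq_integral_choose (n : ℕ) (p : Fin n → ℝ)
    (hp : ∀ i, p i ∈ Set.Icc (0:ℝ) 1) (k : ℕ) (hk : k ≤ n) :
    E k p = ∫ x, (∏ j ∈ Finset.range k, (x - (j : ℝ))) / (Nat.factorial k : ℝ) ∂(BC n p) := by
  rw [aux_integral_BC n p hp (f := fun x => (∏ j ∈ Finset.range k, (x - (j : ℝ)))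
      / (Nat.factorial k : ℝ)) (by fun_prop)]
  rw [← aux_comb p k]
  refine Finset.sum_congr rfl fun J _ => ?_
  rw [aux_choose_eval]
end

section
/- Let I be a finite set with n = #I and f : [0,1]^I → ℝ. The following are equivalent: (a) there exists g : {0,…,n} → ℝ with f(p) = ∫ g dBC_p for all p ∈ [0,1]^I; (b) f is permutation invariant in its n variables and affine-linear in each; (c) there exists b ∈ ℝ^{n+1} with f(p) = Σ_{k=0}^{n} b_k E_k(p) for all p ∈ [0,1]^I. -/
open MeasureTheory

namespace HA
open Finset


lemma mconv_eq_conv (μ ν : Measure ℝ) : mconv μ ν = μ.conv ν := rfl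

instance bern_finite (q : ℝ) : IsFiniteMeasure (bern q) := by
  constructor
  simp only [bern, Measure.add_apply, Measure.smul_apply, smul_eq_mul]
  simp [ENNReal.add_lt_top]

lemma BC_finite (n : ℕ) (p : Fin n → ℝ) : IsFiniteMeasure (BC n p) := by
  induction n with
  | zero => rw [BC]; infer_instance
  | succ n ih =>
    rw [BC, mconv_eq_conv]
    haveI := ih (fun i => p i.castSucc)
    infer_instance

lemma prod_smul_right (μ ν : Measure ℝ) [SFinite μ] [SFinite ν] (c : ENNReal) (hc : c ≠ ⊤) :
    μ.prod (c • ν) = c • μ.prod ν := by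
  ext s hs
  rw [Measure.prod_apply hs, Measure.smul_apply, Measure.prod_apply hs, smul_eq_mul,
    ← MeasureTheory.lintegral_const_mul' _ _ hc]
  simp [Measure.smul_apply]

lemma mconv_smul_right (μ ν : Measure ℝ) [SFinite μ] [SFinite ν] (c : ENNReal) (hc : c ≠ ⊤) :
    mconv μ (c • ν) = c • mconv μ ν := by
  rw [mconv, mconv, prod_smul_right μ ν c hc, Measure.map_smul]

lemma mconv_dirac' (μ : Measure ℝ) [SFinite μ] (c : ℝ) :
    mconv μ (Measure.dirac c) = μ.map (· + c) := by
  rw [mconv, Measure.prod_dirac, Measure.map_map (by fun_prop) (by fun_prop)]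
  rfl

lemma map_add_singleton (μ : Measure ℝ) (c x : ℝ) :
    (μ.map (· + c)) {x} = μ {x - c} := by
  rw [Measure.map_apply (by fun_prop) (measurableSet_singleton x)]
  congr 1
  ext y
  simp only [Set.mem_preimage, Set.mem_singleton_iff]
  constructor <;> intro h <;> linarith

lemma mconv_bern_apply (μ : Measure ℝ) [IsFiniteMeasure μ] (q : ℝ) (x : ℝ) :
    (mconv μ (bern q)) {x}
      = ENNReal.ofReal (1 - q) * μ {x} + ENNReal.ofReal q * μ {x - 1} := by
  have h1 : mconv μ (bern q)
      = ENNReal.ofReal (1 - q) • μ.map (· + (0:ℝ)) + ENNReal.ofReal q • μ.map (· + (1:ℝ)) := by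
    rw [bern, mconv_eq_conv, Measure.conv_add, ← mconv_eq_conv, ← mconv_eq_conv,
      mconv_smul_right _ _ _ ENNReal.ofReal_ne_top,
      mconv_smul_right _ _ _ ENNReal.ofReal_ne_top, mconv_dirac', mconv_dirac']
  rw [h1]
  simp only [Measure.add_apply, Measure.smul_apply, smul_eq_mul, map_add_singleton]
  norm_num



variable {n : ℕ}

noncomputable def wt (p : Fin n → ℝ) (J : Finset (Fin n)) : ℝ :=
  (∏ i ∈ J, p i) * ∏ i ∈ Jᶜ, (1 - p i)

lemma wt_nonneg {p : Fin n → ℝ} (hp : ∀ i, p i ∈ Set.Icc (0:ℝ) 1) (J : Finset (Fin n)) :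
    0 ≤ wt p J := by
  apply mul_nonneg
  · exact prod_nonneg fun i _ => (hp i).1
  · exact prod_nonneg fun i _ => by linarith [(hp i).2]

lemma compl_map_castSucc (J : Finset (Fin n)) :
    (J.map Fin.castSuccEmb)ᶜ = insert (Fin.last n) (Jᶜ.map Fin.castSuccEmb) := by
  ext i
  simp only [mem_compl, mem_insert, mem_map, Fin.coe_castSuccEmb]
  induction i using Fin.lastCases with
  | last =>
    simp only [eq_self_iff_true, true_or, iff_true]
    rintro ⟨a, _, ha⟩
    exact (Fin.castSucc_lt_last a).ne ha
  | cast j =>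
    constructor
    · intro h
      exact Or.inr ⟨j, fun hj => h ⟨j, hj, rfl⟩, rfl⟩
    · rintro (h | ⟨a, haJ, ha⟩) ⟨b, hb, hbe⟩
      · exact (Fin.castSucc_lt_last j).ne h
      · rw [Fin.castSucc_inj] at ha hbe; subst ha; subst hbe; exact haJ hb

lemma compl_insert_map_castSucc (J : Finset (Fin n)) :
    (insert (Fin.last n) (J.map Fin.castSuccEmb))ᶜ = Jᶜ.map Fin.castSuccEmb := by
  have h := compl_map_castSucc Jᶜ
  rw [compl_compl] at h
  rw [← h, compl_compl]

lemma last_not_mem_map (J : Finset (Fin n)) : Fin.last n ∉ J.map Fin.castSuccEmb := by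
  simp only [mem_map, Fin.coe_castSuccEmb]
  rintro ⟨a, _, ha⟩
  exact (Fin.castSucc_lt_last a).ne ha

lemma wt_map (p : Fin (n+1) → ℝ) (J : Finset (Fin n)) :
    wt p (J.map Fin.castSuccEmb)
      = (1 - p (Fin.last n)) * wt (fun i => p i.castSucc) J := by
  rw [wt, wt, compl_map_castSucc, prod_insert (last_not_mem_map _), prod_map, prod_map]
  simp only [Fin.coe_castSuccEmb]
  ring

lemma wt_insert (p : Fin (n+1) → ℝ) (J : Finset (Fin n)) :
    wt p (insert (Fin.last n) (J.map Fin.castSuccEmb))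
      = p (Fin.last n) * wt (fun i => p i.castSucc) J := by
  rw [wt, wt, compl_insert_map_castSucc, prod_insert (last_not_mem_map _), prod_map, prod_map]
  simp only [Fin.coe_castSuccEmb]
  ring

lemma powerset_map_eq {α β : Type*} [DecidableEq α] [DecidableEq β] (e : α ↪ β) (s : Finset α) :
    (s.map e).powerset = s.powerset.image (fun u => u.map e) := by
  ext t
  simp only [mem_powerset, mem_image]
  constructor
  · intro h
    refine ⟨s.filter (fun a => e a ∈ t), filter_subset _ _, ?_⟩
    ext x
    simp only [mem_map, mem_filter]
    constructor
    · rintro ⟨a, ⟨_, hat⟩, rfl⟩; exact hat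
    · intro hx
      obtain ⟨a, ha, rfl⟩ := mem_map.1 (h hx)
      exact ⟨a, ⟨ha, hx⟩, rfl⟩
  · rintro ⟨u, hu, rfl⟩
    exact map_subset_map.2 hu

lemma sum_powerset_map {M : Type*} [AddCommMonoid M] {α β : Type*} [DecidableEq α] [DecidableEq β]
    (e : α ↪ β) (s : Finset α) (F : Finset β → M) :
    ∑ T ∈ (s.map e).powerset, F T = ∑ J ∈ s.powerset, F (J.map e) := by
  rw [powerset_map_eq, sum_image]
  intro u _ v _ h
  exact Finset.map_injective e h


lemma BC_mass : ∀ (n : ℕ) (p : Fin n → ℝ), (∀ i, p i ∈ Set.Icc (0:ℝ) 1) → ∀ x : ℝ,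
    (BC n p) {x} = ∑ J ∈ (Finset.univ : Finset (Fin n)).powerset,
      (if (J.card : ℝ) = x then ENNReal.ofReal (wt p J) else 0) := by
  intro n
  induction n with
  | zero =>
    intro p _ x
    rw [BC]
    rw [Measure.dirac_apply' _ (measurableSet_singleton x)]
    simp only [Set.indicator_apply, Set.mem_singleton_iff, Pi.one_apply]
    have : (Finset.univ : Finset (Fin 0)) = ∅ := rfl
    rw [this, powerset_empty, sum_singleton]
    simp [wt]
  | succ n ih =>
    intro p hp x
    set q := p (Fin.last n) with hq
    set p' : Fin n → ℝ := fun i => p i.castSucc with hp'def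
    have hp' : ∀ i, p' i ∈ Set.Icc (0:ℝ) 1 := fun i => hp _
    haveI := BC_finite n p'
    rw [BC, mconv_bern_apply _ q x, ih p' hp' x, ih p' hp' (x - 1)]
    conv_rhs => rw [Fin.univ_castSuccEmb, Finset.cons_eq_insert,
      Finset.sum_powerset_insert (last_not_mem_map _)]
    rw [sum_powerset_map, sum_powerset_map, Finset.mul_sum, Finset.mul_sum]
    congr 1
    · apply Finset.sum_congr rfl
      intro J _
      rw [card_map, wt_map, mul_ite, mul_zero,
        ENNReal.ofReal_mul (by linarith [(hp (Fin.last n)).2])]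
    · apply Finset.sum_congr rfl
      intro J _
      rw [card_insert_of_notMem (last_not_mem_map _), card_map, wt_insert, mul_ite, mul_zero,
        ENNReal.ofReal_mul (hp (Fin.last n)).1]
      apply if_congr _ rfl rfl
      push_cast
      constructor <;> intro h <;> linarith

lemma BC_mass_toReal (n : ℕ) (p : Fin n → ℝ) (hp : ∀ i, p i ∈ Set.Icc (0:ℝ) 1) (k : ℕ) :
    ((BC n p) {(k : ℝ)}).toReal = ∑ J ∈ (Finset.univ : Finset (Fin n)).powersetCard k, wt p J := by
  rw [BC_mass n p hp (k : ℝ), ENNReal.toReal_sum (fun J _ => by split <;> simp)]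
  rw [powersetCard_eq_filter, Finset.sum_filter]
  apply Finset.sum_congr rfl
  intro J _
  by_cases h : J.card = k
  · simp [h, ENNReal.toReal_ofReal (wt_nonneg hp J)]
  · simp [h, fun hc => h (Nat.cast_injective hc)]






lemma sum_powerset_group (M : Finset (Fin n)) (G : ℕ → ℝ) (H : Finset (Fin n) → ℝ) :
    ∑ J ∈ M.powerset, G J.card * H J
      = ∑ k ∈ Finset.range (M.card + 1), G k * ∑ J ∈ M.powersetCard k, H J := by
  rw [Finset.sum_powerset]
  refine sum_congr rfl fun k _ => ?_
  rw [mul_sum]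
  exact sum_congr rfl fun J hJ => by rw [(mem_powersetCard.1 hJ).2]

lemma sum_powerset_card (M : Finset (Fin n)) (G : ℕ → ℝ) :
    ∑ J ∈ M.powerset, G J.card
      = ∑ k ∈ Finset.range (M.card + 1), (M.card.choose k : ℝ) * G k := by
  rw [Finset.sum_powerset]
  refine sum_congr rfl fun k _ => ?_
  rw [sum_congr rfl (fun J hJ => by rw [(mem_powersetCard.1 hJ).2]), sum_const,
    card_powersetCard, nsmul_eq_mul]

lemma groupE (d : ℕ → ℝ) (p : Fin n → ℝ) :
    ∑ L ∈ (univ : Finset (Fin n)).powerset, d L.card * ∏ i ∈ L, p i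
      = ∑ k ∈ Finset.range (n + 1), d k * E k p := by
  rw [sum_powerset_group]
  simp only [card_univ, Fintype.card_fin]
  rfl

lemma disjoint_of_subset_compl {J K : Finset (Fin n)} (h : K ⊆ Jᶜ) : Disjoint J K :=
  disjoint_left.2 fun i hiJ hiK => (mem_compl.1 (h hiK)) hiJ

lemma union_sdiff_self_of_compl {A B : Finset (Fin n)} (h : B ⊆ Aᶜ) : (A ∪ B) \ A = B := by
  ext i
  simp only [mem_sdiff, mem_union]
  constructor
  · rintro ⟨h1 | h1, h2⟩
    · exact absurd h1 h2
    · exact h1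
  · intro hB
    exact ⟨Or.inr hB, fun hA => (mem_compl.1 (h hB)) hA⟩

lemma union_sdiff_self_of_subset {J L : Finset (Fin n)} (h : J ⊆ L) : J ∪ (L \ J) = L := by
  ext i
  simp only [mem_union, mem_sdiff]
  constructor
  · rintro (h1 | ⟨h1, _⟩)
    · exact h h1
    · exact h1
  · intro hL
    by_cases hJ : i ∈ J
    · exact Or.inl hJ
    · exact Or.inr ⟨hL, hJ⟩

lemma wt_eq_sum (p : Fin n → ℝ) (J : Finset (Fin n)) :
    wt p J = ∑ K ∈ Jᶜ.powerset, (-1 : ℝ) ^ K.card * ∏ i ∈ J ∪ K, p i := by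
  rw [wt]
  have h1 : ∏ i ∈ Jᶜ, (1 - p i) = ∏ i ∈ Jᶜ, ((-p i) + 1) :=
    prod_congr rfl fun i _ => by ring
  rw [h1, Finset.prod_add, mul_sum]
  refine sum_congr rfl fun K hK => ?_
  have hd : Disjoint J K := disjoint_of_subset_compl (mem_powerset.1 hK)
  rw [prod_union hd]
  have h2 : ∏ i ∈ K, (-p i) = (-1:ℝ) ^ K.card * ∏ i ∈ K, p i := by
    rw [← prod_const (-1:ℝ), ← prod_mul_distrib]
    exact prod_congr rfl fun i _ => by ring
  rw [h2, prod_const_one]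
  ring

lemma prod_eq_sum_wt (p : Fin n → ℝ) (K : Finset (Fin n)) :
    ∏ i ∈ K, p i = ∑ T ∈ Kᶜ.powerset, wt p (K ∪ T) := by
  have hone : ∏ i ∈ Kᶜ, (p i + (1 - p i)) = 1 := by
    rw [prod_congr rfl fun i _ => (by ring : p i + (1 - p i) = 1)]
    exact prod_const_one
  calc ∏ i ∈ K, p i = (∏ i ∈ K, p i) * ∏ i ∈ Kᶜ, (p i + (1 - p i)) := by rw [hone, mul_one]
    _ = ∑ T ∈ Kᶜ.powerset, (∏ i ∈ K, p i) * ((∏ i ∈ T, p i) * ∏ i ∈ Kᶜ \ T, (1 - p i)) := by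
        rw [Finset.prod_add, mul_sum]
    _ = ∑ T ∈ Kᶜ.powerset, wt p (K ∪ T) := by
        refine sum_congr rfl fun T hT => ?_
        have hd : Disjoint K T := disjoint_of_subset_compl (mem_powerset.1 hT)
        have hc : (K ∪ T)ᶜ = Kᶜ \ T := by
          ext i
          simp only [mem_compl, mem_union, mem_sdiff]
          constructor
          · intro h
            exact ⟨fun hK' => h (Or.inl hK'), fun hT' => h (Or.inr hT')⟩
          · rintro ⟨h1, h2⟩ (h3 | h3)
            · exact h1 h3
            · exact h2 h3
        rw [wt, prod_union hd, hc]
        ring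

lemma swap_powerset (F : Finset (Fin n) → Finset (Fin n) → ℝ) :
    ∑ A ∈ (univ : Finset (Fin n)).powerset, ∑ B ∈ Aᶜ.powerset, F A B
      = ∑ L ∈ (univ : Finset (Fin n)).powerset, ∑ J ∈ L.powerset, F J (L \ J) := by
  rw [Finset.sum_sigma' _ _ (fun A B => F A B), Finset.sum_sigma' _ _ (fun L J => F J (L \ J))]
  refine Finset.sum_nbij' (fun x => ⟨x.1 ∪ x.2, x.1⟩) (fun y => ⟨y.2, y.1 \ y.2⟩) ?_ ?_ ?_ ?_ ?_
  · rintro ⟨A, B⟩ h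
    rw [mem_sigma] at h ⊢
    exact ⟨mem_powerset.2 (subset_univ _), mem_powerset.2 subset_union_left⟩
  · rintro ⟨L, J⟩ h
    rw [mem_sigma] at h ⊢
    refine ⟨mem_powerset.2 (subset_univ _), mem_powerset.2 fun i hi => ?_⟩
    exact mem_compl.2 (mem_sdiff.1 hi).2
  · rintro ⟨A, B⟩ h
    rw [mem_sigma] at h
    have : (A ∪ B) \ A = B := union_sdiff_self_of_compl (mem_powerset.1 h.2)
    simp only [Sigma.mk.inj_iff, heq_eq_eq]
    exact ⟨trivial, this⟩
  · rintro ⟨L, J⟩ h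
    rw [mem_sigma] at h
    have : J ∪ (L \ J) = L := union_sdiff_self_of_subset (mem_powerset.1 h.2)
    simp only [Sigma.mk.inj_iff, heq_eq_eq]
    exact ⟨this, trivial⟩
  · rintro ⟨A, B⟩ h
    rw [mem_sigma] at h
    have : (A ∪ B) \ A = B := union_sdiff_self_of_compl (mem_powerset.1 h.2)
    simp only [this]

lemma brep_to_mrep (c : ℕ → ℝ) (p : Fin n → ℝ) :
    ∑ J ∈ (univ : Finset (Fin n)).powerset, c J.card * wt p J
      = ∑ L ∈ (univ : Finset (Fin n)).powerset,
          (∑ j ∈ Finset.range (L.card + 1),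
            (L.card.choose j : ℝ) * ((-1:ℝ) ^ (L.card - j) * c j)) * ∏ i ∈ L, p i := by
  have step1 : ∑ J ∈ (univ : Finset (Fin n)).powerset, c J.card * wt p J
      = ∑ A ∈ (univ : Finset (Fin n)).powerset, ∑ B ∈ Aᶜ.powerset,
          c A.card * ((-1:ℝ) ^ B.card * ∏ i ∈ A ∪ B, p i) := by
    refine sum_congr rfl fun J _ => ?_
    rw [wt_eq_sum, mul_sum]
  rw [step1, swap_powerset (fun A B => c A.card * ((-1:ℝ) ^ B.card * ∏ i ∈ A ∪ B, p i))]
  refine sum_congr rfl fun L hL => ?_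
  have inner : ∀ J ∈ L.powerset,
      c J.card * ((-1:ℝ) ^ (L \ J).card * ∏ i ∈ J ∪ (L \ J), p i)
        = (c J.card * (-1:ℝ) ^ (L.card - J.card)) * ∏ i ∈ L, p i := by
    intro J hJ
    have hJL : J ⊆ L := mem_powerset.1 hJ
    rw [card_sdiff_of_subset hJL, union_sdiff_self_of_subset hJL]
    ring
  rw [sum_congr rfl inner, ← sum_mul]
  congr 1
  rw [sum_powerset_card L (fun m => c m * (-1:ℝ) ^ (L.card - m))]
  exact sum_congr rfl fun j _ => by ring

lemma mrep_to_brep (d : ℕ → ℝ) (p : Fin n → ℝ) :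
    ∑ L ∈ (univ : Finset (Fin n)).powerset, d L.card * ∏ i ∈ L, p i
      = ∑ M ∈ (univ : Finset (Fin n)).powerset,
          (∑ j ∈ Finset.range (M.card + 1), (M.card.choose j : ℝ) * d j) * wt p M := by
  have step1 : ∑ L ∈ (univ : Finset (Fin n)).powerset, d L.card * ∏ i ∈ L, p i
      = ∑ A ∈ (univ : Finset (Fin n)).powerset, ∑ B ∈ Aᶜ.powerset, d A.card * wt p (A ∪ B) := by
    refine sum_congr rfl fun L _ => ?_
    rw [prod_eq_sum_wt, mul_sum]
  rw [step1, swap_powerset (fun A B => d A.card * wt p (A ∪ B))]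
  refine sum_congr rfl fun M hM => ?_
  have inner : ∀ J ∈ M.powerset, d J.card * wt p (J ∪ (M \ J)) = d J.card * wt p M := by
    intro J hJ
    rw [union_sdiff_self_of_subset (mem_powerset.1 hJ)]
  rw [sum_congr rfl inner, ← sum_mul, sum_powerset_card M d]






lemma wt_update (p : Fin n → ℝ) (i : Fin n) (t : ℝ) (J : Finset (Fin n)) :
    wt (Function.update p i t) J
      = (1 - t) * wt (Function.update p i 0) J + t * wt (Function.update p i 1) J := by
  by_cases h : i ∈ J
  · have h' : i ∉ Jᶜ := by simp [h]
    have key : ∀ s : ℝ, wt (Function.update p i s) J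
        = s * ((∏ j ∈ J \ {i}, p j) * ∏ j ∈ Jᶜ, (1 - p j)) := by
      intro s
      rw [wt, Finset.prod_update_of_mem h]
      have hcst : ∏ j ∈ Jᶜ, (1 - Function.update p i s j) = ∏ j ∈ Jᶜ, (1 - p j) :=
        prod_congr rfl fun j hj => by
          rw [Function.update_of_ne (by rintro rfl; exact h' hj)]
      rw [hcst]; ring
    rw [key, key, key]; ring
  · have h' : i ∈ Jᶜ := mem_compl.2 h
    have key : ∀ s : ℝ, wt (Function.update p i s) J
        = (1 - s) * ((∏ j ∈ J, p j) * ∏ j ∈ Jᶜ \ {i}, (1 - p j)) := by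
      intro s
      rw [wt]
      have h1 : ∏ j ∈ J, Function.update p i s j = ∏ j ∈ J, p j :=
        prod_congr rfl fun j hj => by
          rw [Function.update_of_ne (by rintro rfl; exact h hj)]
      have h2 : (fun j => 1 - Function.update p i s j)
          = Function.update (fun j => 1 - p j) i (1 - s) := by
        funext j
        by_cases hji : j = i
        · subst hji; simp
        · simp [Function.update_of_ne hji]
      calc (∏ j ∈ J, Function.update p i s j) * ∏ j ∈ Jᶜ, (1 - Function.update p i s j)
          = (∏ j ∈ J, p j) * ∏ j ∈ Jᶜ, Function.update (fun j => 1 - p j) i (1 - s) j := by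
            rw [h1]; congr 1; rw [h2]
        _ = (1 - s) * ((∏ j ∈ J, p j) * ∏ j ∈ Jᶜ \ {i}, (1 - p j)) := by
            rw [Finset.prod_update_of_mem h']; ring
    rw [key, key, key]; ring

def chi (J : Finset (Fin n)) : Fin n → ℝ := fun i => if i ∈ J then 1 else 0

lemma chi_cube (J : Finset (Fin n)) : ∀ i, chi J i ∈ Set.Icc (0:ℝ) 1 := fun i => by
  unfold chi; split <;> norm_num

lemma update_cube {p : Fin n → ℝ} (hp : ∀ j, p j ∈ Set.Icc (0:ℝ) 1) (i : Fin n) {t : ℝ}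
    (ht : t ∈ Set.Icc (0:ℝ) 1) : ∀ j, Function.update p i t j ∈ Set.Icc (0:ℝ) 1 := by
  intro j
  by_cases hji : j = i
  · subst hji; simp [ht]
  · simp [Function.update_of_ne hji, hp j]

def ov (s J : Finset (Fin n)) (p : Fin n → ℝ) : Fin n → ℝ :=
  fun i => if i ∈ s then (if i ∈ J then 1 else 0) else p i

lemma ov_cube {p : Fin n → ℝ} (hp : ∀ j, p j ∈ Set.Icc (0:ℝ) 1) (s J : Finset (Fin n)) :
    ∀ j, ov s J p j ∈ Set.Icc (0:ℝ) 1 := by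
  intro j
  unfold ov
  split
  · split <;> norm_num
  · exact hp j

lemma interp (f : (Fin n → ℝ) → ℝ)
    (haff : ∀ (i : Fin n) (p : Fin n → ℝ), (∀ j, p j ∈ Set.Icc (0:ℝ) 1) →
      ∃ α β : ℝ, ∀ t ∈ Set.Icc (0:ℝ) 1, f (Function.update p i t) = α + β * t) :
    ∀ s : Finset (Fin n), ∀ p : Fin n → ℝ, (∀ j, p j ∈ Set.Icc (0:ℝ) 1) →
      f p = ∑ J ∈ s.powerset, ((∏ i ∈ J, p i) * ∏ i ∈ s \ J, (1 - p i)) * f (ov s J p) := by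
  intro s
  induction s using Finset.induction_on with
  | empty =>
    intro p _
    rw [powerset_empty, sum_singleton]
    have : ov ∅ ∅ p = p := funext fun i => by simp [ov]
    simp [this]
  | insert a s ha ih =>
    intro p hp
    rw [ih p hp, Finset.sum_powerset_insert ha, ← Finset.sum_add_distrib]
    refine sum_congr rfl fun J hJ => ?_
    have hJs : J ⊆ s := mem_powerset.1 hJ
    have haJ : a ∉ J := fun hc => ha (hJs hc)
    set q : Fin n → ℝ := ov s J p with hqdef
    have hq : ∀ j, q j ∈ Set.Icc (0:ℝ) 1 := ov_cube hp s J
    have hqa : q a = p a := by simp [hqdef, ov, ha]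
    obtain ⟨α, β, hab⟩ := haff a q hq
    have h0 := hab 0 (by norm_num)
    have h1 := hab 1 (by norm_num)
    have hself : Function.update q a (p a) = q := by
      rw [← hqa]; exact Function.update_eq_self a q
    have hfq : f q = α + β * p a := by
      have hpa := hab (p a) (hp a)
      rwa [hself] at hpa
    have hkey : f q = (1 - p a) * f (Function.update q a 0) + p a * f (Function.update q a 1) := by
      rw [hfq, h0, h1]; ring
    have hov0 : Function.update q a 0 = ov (insert a s) J p := by
      funext i
      by_cases hia : i = a
      · subst hia
        simp [ov, Function.update_self, mem_insert, haJ]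
      · rw [Function.update_of_ne hia]
        simp only [hqdef, ov, mem_insert]
        by_cases his : i ∈ s
        · simp [his]
        · simp [his, hia]
    have hov1 : Function.update q a 1 = ov (insert a s) (insert a J) p := by
      funext i
      by_cases hia : i = a
      · subst hia
        simp [ov, Function.update_self, mem_insert]
      · rw [Function.update_of_ne hia]
        simp only [hqdef, ov, mem_insert]
        by_cases his : i ∈ s
        · by_cases hiJ : i ∈ J <;> simp [his, hia, hiJ]
        · simp [his, hia]
    have hsd1 : (insert a s) \ J = insert a (s \ J) := by
      ext i
      simp only [mem_sdiff, mem_insert]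
      constructor
      · rintro ⟨h1' | h1', h2'⟩
        · exact Or.inl h1'
        · exact Or.inr ⟨h1', h2'⟩
      · rintro (h1' | ⟨h1', h2'⟩)
        · exact ⟨Or.inl h1', fun hc => haJ (h1' ▸ hc)⟩
        · exact ⟨Or.inr h1', h2'⟩
    have hsd2 : (insert a s) \ (insert a J) = s \ J := by
      ext i
      simp only [mem_sdiff, mem_insert]
      constructor
      · rintro ⟨h1' | h1', h2'⟩
        · exact absurd (Or.inl h1') h2'
        · exact ⟨h1', fun hc => h2' (Or.inr hc)⟩
      · rintro ⟨h1', h2'⟩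
        refine ⟨Or.inr h1', ?_⟩
        rintro (hc | hc)
        · exact ha (hc ▸ h1')
        · exact h2' hc
    have hans : a ∉ s \ J := fun hc => ha (mem_sdiff.1 hc).1
    rw [hkey, hov0, hov1, hsd1, hsd2, prod_insert hans, prod_insert haJ]
    ring






lemma map_perm_compl (σ : Equiv.Perm (Fin n)) (J : Finset (Fin n)) :
    Jᶜ.map σ.toEmbedding = (J.map σ.toEmbedding)ᶜ := by
  ext x
  simp only [mem_map, mem_compl, Equiv.coe_toEmbedding]
  constructor
  · rintro ⟨a, ha, rfl⟩ ⟨b, hb, hba⟩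
    have := σ.injective hba
    subst this
    exact ha hb
  · intro h
    exact ⟨σ.symm x, fun hmem => h ⟨σ.symm x, hmem, σ.apply_symm_apply x⟩, σ.apply_symm_apply x⟩

lemma map_perm_symm (σ : Equiv.Perm (Fin n)) (J : Finset (Fin n)) :
    (J.map σ.toEmbedding).map σ.symm.toEmbedding = J := by
  ext x
  simp only [mem_map, Equiv.coe_toEmbedding]
  constructor
  · rintro ⟨a, ⟨b, hb, rfl⟩, rfl⟩
    simpa using hb
  · intro hx
    exact ⟨σ x, ⟨x, hx, rfl⟩, σ.symm_apply_apply x⟩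

lemma wt_comp_perm (p : Fin n → ℝ) (σ : Equiv.Perm (Fin n)) (J : Finset (Fin n)) :
    wt (p ∘ σ) J = wt p (J.map σ.toEmbedding) := by
  rw [wt, wt, ← map_perm_compl, prod_map, prod_map]
  rfl

lemma sum_wt_comp_perm (c : ℕ → ℝ) (p : Fin n → ℝ) (σ : Equiv.Perm (Fin n)) :
    ∑ J ∈ (univ : Finset (Fin n)).powerset, c J.card * wt (p ∘ σ) J
      = ∑ J ∈ (univ : Finset (Fin n)).powerset, c J.card * wt p J := by
  refine Finset.sum_nbij' (fun J => J.map σ.toEmbedding) (fun J => J.map σ.symm.toEmbedding)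
    ?_ ?_ ?_ ?_ ?_
  · intro J _; exact mem_powerset.2 (subset_univ _)
  · intro J _; exact mem_powerset.2 (subset_univ _)
  · intro J _; exact map_perm_symm σ J
  · intro J _
    have := map_perm_symm σ.symm J
    simpa using this
  · intro J _
    rw [card_map, wt_comp_perm]

lemma perm_of_card_eq {J K : Finset (Fin n)} (h : J.card = K.card) :
    ∃ σ : Equiv.Perm (Fin n), ∀ i, (i ∈ J ↔ σ i ∈ K) := by
  classical
  have h1 : Fintype.card {x : Fin n // x ∈ J} = Fintype.card {x : Fin n // x ∈ K} := by
    simp [Fintype.card_coe, h]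
  have h2 : Fintype.card {x : Fin n // ¬ x ∈ J} = Fintype.card {x : Fin n // ¬ x ∈ K} := by
    rw [Fintype.card_subtype_compl, Fintype.card_subtype_compl, h1]
  let e : {x : Fin n // x ∈ J} ≃ {x : Fin n // x ∈ K} := Fintype.equivOfCardEq h1
  let e' : {x : Fin n // ¬ x ∈ J} ≃ {x : Fin n // ¬ x ∈ K} := Fintype.equivOfCardEq h2
  refine ⟨Equiv.subtypeCongr e e', fun i => ?_⟩
  by_cases hi : i ∈ J
  · have : Equiv.subtypeCongr e e' i = (e ⟨i, hi⟩ : Fin n) := by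
      simp [Equiv.subtypeCongr, hi]
    rw [this]
    exact iff_of_true hi (e ⟨i, hi⟩).2
  · have : Equiv.subtypeCongr e e' i = (e' ⟨i, hi⟩ : Fin n) := by
      simp [Equiv.subtypeCongr, hi]
    rw [this]
    exact iff_of_false hi (e' ⟨i, hi⟩).2


def Brep (f : (Fin n → ℝ) → ℝ) (c : ℕ → ℝ) : Prop :=
  ∀ p : Fin n → ℝ, (∀ i, p i ∈ Set.Icc (0:ℝ) 1) →
    f p = ∑ J ∈ (univ : Finset (Fin n)).powerset, c J.card * wt p J

lemma key_group (p : Fin n → ℝ) (hp : ∀ i, p i ∈ Set.Icc (0:ℝ) 1) (c : ℕ → ℝ) :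
    ∑ k ∈ Finset.range (n + 1), c k * ((BC n p) {(k : ℝ)}).toReal
      = ∑ J ∈ (univ : Finset (Fin n)).powerset, c J.card * wt p J := by
  have h := sum_powerset_group (univ : Finset (Fin n)) c (wt p)
  rw [card_univ, Fintype.card_fin] at h
  rw [h]
  exact sum_congr rfl fun k _ => by rw [BC_mass_toReal n p hp k]

lemma brep_of_a {f : (Fin n → ℝ) → ℝ} {g : ℕ → ℝ}
    (hg : ∀ p : Fin n → ℝ, (∀ i, p i ∈ Set.Icc (0:ℝ) 1) →
      f p = ∑ k ∈ Finset.range (n + 1), g k * ((BC n p) {(k : ℝ)}).toReal) :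
    Brep f g := fun p hp => by rw [hg p hp, key_group p hp g]

lemma a_of_brep {f : (Fin n → ℝ) → ℝ} {c : ℕ → ℝ} (h : Brep f c) :
    ∀ p : Fin n → ℝ, (∀ i, p i ∈ Set.Icc (0:ℝ) 1) →
      f p = ∑ k ∈ Finset.range (n + 1), c k * ((BC n p) {(k : ℝ)}).toReal :=
  fun p hp => by rw [h p hp, key_group p hp c]

lemma symm_of_brep {f : (Fin n → ℝ) → ℝ} {c : ℕ → ℝ} (h : Brep f c) :
    ∀ σ : Equiv.Perm (Fin n), ∀ p : Fin n → ℝ, (∀ i, p i ∈ Set.Icc (0:ℝ) 1) →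
      f (p ∘ σ) = f p := by
  intro σ p hp
  have hpσ : ∀ i, (p ∘ σ) i ∈ Set.Icc (0:ℝ) 1 := fun i => hp (σ i)
  rw [h _ hpσ, h p hp, sum_wt_comp_perm]

lemma affine_of_brep {f : (Fin n → ℝ) → ℝ} {c : ℕ → ℝ} (h : Brep f c) :
    ∀ (i : Fin n) (p : Fin n → ℝ), (∀ j, p j ∈ Set.Icc (0:ℝ) 1) →
      ∃ α β : ℝ, ∀ t ∈ Set.Icc (0:ℝ) 1, f (Function.update p i t) = α + β * t := by
  intro i p hp
  refine ⟨f (Function.update p i 0), f (Function.update p i 1) - f (Function.update p i 0),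
    fun t ht => ?_⟩
  have h0 : (0:ℝ) ∈ Set.Icc (0:ℝ) 1 := by norm_num
  have h1 : (1:ℝ) ∈ Set.Icc (0:ℝ) 1 := by norm_num
  have key : f (Function.update p i t)
      = (1 - t) * f (Function.update p i 0) + t * f (Function.update p i 1) := by
    rw [h _ (update_cube hp i ht), h _ (update_cube hp i h0), h _ (update_cube hp i h1),
      mul_sum, mul_sum, ← Finset.sum_add_distrib]
    refine sum_congr rfl fun J _ => ?_
    rw [wt_update]
    ring
  rw [key]
  ring

lemma chi_card_eq {f : (Fin n → ℝ) → ℝ}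
    (hsym : ∀ σ : Equiv.Perm (Fin n), ∀ p : Fin n → ℝ, (∀ i, p i ∈ Set.Icc (0:ℝ) 1) →
      f (p ∘ σ) = f p)
    {J K : Finset (Fin n)} (h : J.card = K.card) : f (chi J) = f (chi K) := by
  obtain ⟨σ, hσ⟩ := perm_of_card_eq h
  have hchi : chi K ∘ σ = chi J := by
    funext i
    simp only [Function.comp_apply, chi]
    by_cases hi : i ∈ J
    · rw [if_pos ((hσ i).1 hi), if_pos hi]
    · rw [if_neg (fun hc => hi ((hσ i).2 hc)), if_neg hi]
  rw [← hchi]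
  exact hsym σ (chi K) (chi_cube K)

lemma brep_of_b {f : (Fin n → ℝ) → ℝ}
    (hsym : ∀ σ : Equiv.Perm (Fin n), ∀ p : Fin n → ℝ, (∀ i, p i ∈ Set.Icc (0:ℝ) 1) →
      f (p ∘ σ) = f p)
    (haff : ∀ (i : Fin n) (p : Fin n → ℝ), (∀ j, p j ∈ Set.Icc (0:ℝ) 1) →
      ∃ α β : ℝ, ∀ t ∈ Set.Icc (0:ℝ) 1, f (Function.update p i t) = α + β * t) :
    ∃ c : ℕ → ℝ, Brep f c := by
  classical
  have hex : ∀ k : ℕ, k ≤ n → ∃ t : Finset (Fin n), t ⊆ univ ∧ t.card = k := by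
    intro k hk
    exact Finset.exists_subset_card_eq (by simpa using hk)
  set c : ℕ → ℝ := fun k =>
    if h : k ≤ n then f (chi (hex k h).choose) else 0 with hc
  have hcJ : ∀ J : Finset (Fin n), c J.card = f (chi J) := by
    intro J
    have hJn : J.card ≤ n := by
      have := card_le_card (subset_univ J)
      simpa using this
    have hspec := (hex J.card hJn).choose_spec
    rw [hc]
    simp only [hJn, dif_pos]
    exact chi_card_eq hsym hspec.2
  refine ⟨c, fun p hp => ?_⟩
  rw [interp f haff univ p hp]
  refine sum_congr rfl fun J _ => ?_
  have hov : ov univ J p = chi J := by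
    funext i
    simp [ov, chi]
  rw [hov, ← hcJ J, wt]
  have huc : univ \ J = Jᶜ := by rw [compl_eq_univ_sdiff]
  rw [huc]
  ring

end HA

/-- Hoeffding's characterisation: f is an expectation p ↦ ∫ g dBC_p iff f is permutation
invariant and separately affine-linear iff f is a linear combination of elementary
symmetric polynomials. -/
theorem hoeffding_characterisation (n : ℕ) (f : (Fin n → ℝ) → ℝ) :
    ((∃ g : ℕ → ℝ, ∀ p : Fin n → ℝ, (∀ i, p i ∈ Set.Icc (0:ℝ) 1) →
        f p = ∑ k ∈ Finset.range (n + 1), g k * ((BC n p) {(k : ℝ)}).toReal) ↔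
      ((∀ σ : Equiv.Perm (Fin n), ∀ p : Fin n → ℝ, (∀ i, p i ∈ Set.Icc (0:ℝ) 1) →
          f (p ∘ σ) = f p) ∧
        (∀ (i : Fin n) (p : Fin n → ℝ), (∀ j, p j ∈ Set.Icc (0:ℝ) 1) →
          ∃ α β : ℝ, ∀ t ∈ Set.Icc (0:ℝ) 1, f (Function.update p i t) = α + β * t))) ∧
    (((∀ σ : Equiv.Perm (Fin n), ∀ p : Fin n → ℝ, (∀ i, p i ∈ Set.Icc (0:ℝ) 1) →
          f (p ∘ σ) = f p) ∧
        (∀ (i : Fin n) (p : Fin n → ℝ), (∀ j, p j ∈ Set.Icc (0:ℝ) 1) →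
          ∃ α β : ℝ, ∀ t ∈ Set.Icc (0:ℝ) 1, f (Function.update p i t) = α + β * t)) ↔
      (∃ b : ℕ → ℝ, ∀ p : Fin n → ℝ, (∀ i, p i ∈ Set.Icc (0:ℝ) 1) →
        f p = ∑ k ∈ Finset.range (n + 1), b k * E k p)) := by
  classical
  have hab : ∀ c : ℕ → ℝ, HA.Brep f c →
      ((∀ σ : Equiv.Perm (Fin n), ∀ p : Fin n → ℝ, (∀ i, p i ∈ Set.Icc (0:ℝ) 1) →
          f (p ∘ σ) = f p) ∧
        (∀ (i : Fin n) (p : Fin n → ℝ), (∀ j, p j ∈ Set.Icc (0:ℝ) 1) →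
          ∃ α β : ℝ, ∀ t ∈ Set.Icc (0:ℝ) 1, f (Function.update p i t) = α + β * t)) :=
    fun c hc => ⟨HA.symm_of_brep hc, HA.affine_of_brep hc⟩
  constructor
  · constructor
    · rintro ⟨g, hg⟩
      exact hab g (HA.brep_of_a hg)
    · rintro ⟨hsym, haff⟩
      obtain ⟨c, hc⟩ := HA.brep_of_b hsym haff
      exact ⟨c, HA.a_of_brep hc⟩
  · constructor
    · rintro ⟨hsym, haff⟩
      obtain ⟨c, hc⟩ := HA.brep_of_b hsym haff
      refine ⟨fun m => ∑ j ∈ Finset.range (m + 1),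
        (m.choose j : ℝ) * ((-1:ℝ) ^ (m - j) * c j), fun p hp => ?_⟩
      rw [hc p hp, HA.brep_to_mrep]
      exact HA.groupE (fun m => ∑ j ∈ Finset.range (m + 1),
        (m.choose j : ℝ) * ((-1:ℝ) ^ (m - j) * c j)) p
    · rintro ⟨b, hb⟩
      have hBrep : HA.Brep f (fun m => ∑ j ∈ Finset.range (m + 1), (m.choose j : ℝ) * b j) := by
        intro p hp
        rw [hb p hp, ← HA.groupE]
        exact HA.mrep_to_brep b p
      exact hab _ hBrep
end
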